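/- arXiv:1901.00358 — 4 statements merged into one kernel-verified Lean document; each statement's English description precedes it below -/
import Mathlib

section
/- Let F be a field, K a 3-dimensional F-vector space, f₁ : K → F an F-linear map and f₂ : K → F a quadratic form. Then there exists a quadratic field extension E of F (possibly E = F) and a nonzero vector λ ∈ E ⊗_F K such that the E-linear extension of f₁ and the E-quadratic extension of f₂ both vanish at λ. -/
open TensorProduct Module Polynomial

section Aux

variable (F K : Type) [Field F] [AddCommGroup K] [Module F K]

/-- Linear independence of a pair is preserved under base change of fields. -/
lemma li_baseChange (E : Type) [Field E] [Algebra F E] {v₁ v₂ : K}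
    (hv : LinearIndependent F ![v₁, v₂]) :
    LinearIndependent E ![(1 : E) ⊗ₜ[F] v₁, (1 : E) ⊗ₜ[F] v₂] := by
  set p := Submodule.span F (Set.range ![v₁, v₂])
  let b : Basis (Fin 2) F p := Basis.span hv
  let bE : Basis (Fin 2) E (E ⊗[F] p) := b.baseChange E
  have hinj : Function.Injective ((p.subtype).baseChange E) := by
    rw [LinearMap.baseChange_eq_ltensor]
    exact Module.Flat.lTensor_preserves_injective_linearMap _ p.injective_subtype
  have li := bE.linearIndependent.map' _ (LinearMap.ker_eq_bot.mpr hinj)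
  have hcomp : ((p.subtype).baseChange E ∘ bE) = ![(1 : E) ⊗ₜ[F] v₁, (1 : E) ⊗ₜ[F] v₂] := by
    funext i
    rw [Function.comp_apply, Basis.baseChange_apply E b, LinearMap.baseChange_tmul]
    have h2 : (p.subtype) (b i) = ![v₁, v₂] i := congrArg Subtype.val (Basis.span_apply hv i)
    rw [h2]
    fin_cases i <;> rfl
  rwa [hcomp] at li

lemma key (f₁ : K →ₗ[F] F) (f₂ : QuadraticForm F K)
    (E : Type) [Field E] [Algebra F E]
    (hE : Module.finrank F E = 1 ∨ Module.finrank F E = 2)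
    (v₁ v₂ : K) (hv : LinearIndependent F ![v₁, v₂])
    (hv₁ : f₁ v₁ = 0) (hv₂ : f₁ v₂ = 0)
    (B : LinearMap.BilinForm F K) (hB : B.toQuadraticMap = f₂)
    (α β : E) (hαβ : α ≠ 0 ∨ β ≠ 0)
    (hq : α * α * algebraMap F E (B v₁ v₁) + α * β * algebraMap F E (B v₁ v₂)
        + β * α * algebraMap F E (B v₂ v₁) + β * β * algebraMap F E (B v₂ v₂) = 0) :
    ∃ lam : E ⊗[F] K, lam ≠ 0 ∧
        (∃ g : E ⊗[F] K →ₗ[E] E,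
          (∀ k : K, g ((1 : E) ⊗ₜ[F] k) = algebraMap F E (f₁ k)) ∧ g lam = 0) ∧
        (∃ q : QuadraticForm E (E ⊗[F] K),
          (∀ k : K, q ((1 : E) ⊗ₜ[F] k) = algebraMap F E (f₂ k)) ∧ q lam = 0) := by
  refine ⟨α ⊗ₜ[F] v₁ + β ⊗ₜ[F] v₂, ?_, ?_, ?_⟩
  · -- nonzero
    have li := li_baseChange F K E hv
    rw [Fintype.linearIndependent_iff] at li
    intro h
    have h' : (α • ((1 : E) ⊗ₜ[F] v₁) + β • ((1 : E) ⊗ₜ[F] v₂)) = 0 := by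
      rw [smul_tmul', smul_tmul', smul_eq_mul, smul_eq_mul, mul_one, mul_one]
      exact h
    have := li ![α, β] (by
      rw [Fin.sum_univ_two]
      simpa using h')
    rcases hαβ with h0 | h0
    · exact h0 (this 0)
    · exact h0 (this 1)
  · -- linear part
    refine ⟨(Algebra.TensorProduct.rid F E E).toLinearMap.comp (f₁.baseChange E), fun k => ?_, ?_⟩
    · simp [Algebra.TensorProduct.rid_tmul, Algebra.algebraMap_eq_smul_one]
    · simp [Algebra.TensorProduct.rid_tmul, hv₁, hv₂]
  · -- quadratic part
    refine ⟨(B.baseChange E).toQuadraticMap, fun k => ?_, ?_⟩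
    · rw [LinearMap.BilinMap.toQuadraticMap_apply, LinearMap.BilinForm.baseChange_tmul]
      have : B k k = f₂ k := by rw [← hB]; rfl
      rw [this, mul_one, Algebra.smul_def, mul_one]
    · rw [LinearMap.BilinMap.toQuadraticMap_apply]
      simp only [map_add, LinearMap.add_apply, LinearMap.BilinForm.baseChange_tmul]
      rw [Algebra.smul_def, Algebra.smul_def, Algebra.smul_def, Algebra.smul_def]
      rw [← hq]; ring

end Aux

/-- Let `K` be a 3-dimensional `F`-vector space, `f₁ : K → F` a linear
map and `f₂` a quadratic form on `K`. Then there is a field extension `E/F` of degree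
1 or 2 (i.e. `E = F` or a quadratic extension) and a nonzero vector `λ ∈ E ⊗[F] K`
at which both the `E`-linear extension of `f₁` and the `E`-quadratic extension of
`f₂` vanish. -/
theorem stmt_1 (F K : Type) [Field F] [AddCommGroup K] [Module F K]
    (hK : Module.finrank F K = 3) (f₁ : K →ₗ[F] F) (f₂ : QuadraticForm F K) :
    ∃ (E : Type) (_ : Field E) (_ : Algebra F E),
      (Module.finrank F E = 1 ∨ Module.finrank F E = 2) ∧
      ∃ lam : E ⊗[F] K, lam ≠ 0 ∧
        (∃ g : E ⊗[F] K →ₗ[E] E,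
          (∀ k : K, g ((1 : E) ⊗ₜ[F] k) = algebraMap F E (f₁ k)) ∧ g lam = 0) ∧
        (∃ q : QuadraticForm E (E ⊗[F] K),
          (∀ k : K, q ((1 : E) ⊗ₜ[F] k) = algebraMap F E (f₂ k)) ∧ q lam = 0) := by
  have hfin : FiniteDimensional F K := Module.finite_of_finrank_pos (by rw [hK]; norm_num)
  -- the kernel of f₁ has dimension ≥ 2
  have hker : 2 ≤ finrank F ↥(LinearMap.ker f₁) := by
    have h1 := LinearMap.finrank_range_add_finrank_ker f₁
    have h2 : finrank F ↥(LinearMap.range f₁) ≤ 1 := by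
      have := Submodule.finrank_le (LinearMap.range f₁)
      simpa [Module.finrank_self] using this
    omega
  let b := Module.finBasis F ↥(LinearMap.ker f₁)
  let i0 : Fin (finrank F ↥(LinearMap.ker f₁)) := ⟨0, by omega⟩
  let i1 : Fin (finrank F ↥(LinearMap.ker f₁)) := ⟨1, by omega⟩
  let v₁ : K := (b i0 : K)
  let v₂ : K := (b i1 : K)
  have hv : LinearIndependent F ![v₁, v₂] := by
    have hinj : Function.Injective ![i0, i1] := by
      intro i j h
      fin_cases i <;> fin_cases j <;> simp_all [i0, i1] <;> omega
    have li := (b.linearIndependent.comp ![i0, i1] hinj).map'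
      (LinearMap.ker f₁).subtype (Submodule.ker_subtype _)
    have : ((LinearMap.ker f₁).subtype ∘ (b ∘ ![i0, i1])) = ![v₁, v₂] := by
      funext i; fin_cases i <;> rfl
    rwa [this] at li
  have hv₁ : f₁ v₁ = 0 := (b i0).2
  have hv₂ : f₁ v₂ = 0 := (b i1).2
  obtain ⟨B, hB⟩ := LinearMap.BilinMap.toQuadraticMap_surjective f₂
  by_cases ha0 : B v₁ v₁ = 0
  · -- (1, 0) is a zero over F itself
    refine ⟨F, inferInstance, inferInstance, Or.inl (Module.finrank_self F), ?_⟩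
    exact key F K f₁ f₂ F (Or.inl (Module.finrank_self F)) v₁ v₂ hv hv₁ hv₂ B hB 1 0
      (Or.inl one_ne_zero) (by simp [ha0])
  · set p : F[X] := C (B v₁ v₁) * X ^ 2 + C (B v₁ v₂ + B v₂ v₁) * X + C (B v₂ v₂) with hp
    have hpd : p.natDegree = 2 := Polynomial.natDegree_quadratic ha0
    have hp0 : p ≠ 0 := by intro h; rw [h] at hpd; simp at hpd
    by_cases hr : ∃ r : F, p.IsRoot r
    · obtain ⟨r, hr⟩ := hr
      refine ⟨F, inferInstance, inferInstance, Or.inl (Module.finrank_self F), ?_⟩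
      refine key F K f₁ f₂ F (Or.inl (Module.finrank_self F)) v₁ v₂ hv hv₁ hv₂ B hB r 1
        (Or.inr one_ne_zero) ?_
      have h0 : p.eval r = 0 := hr
      rw [hp] at h0
      simp only [eval_add, eval_mul, eval_C, eval_X, eval_pow] at h0
      simp only [Algebra.algebraMap_self, RingHom.id_apply]
      linear_combination h0
    · -- p is irreducible; adjoin a root
      have hirr : Irreducible p := by
        rw [Polynomial.irreducible_iff_roots_eq_zero_of_degree_le_three (by omega) (by omega)]
        rw [Multiset.eq_zero_iff_forall_notMem]
        intro r hrm
        exact hr ⟨r, (Polynomial.mem_roots hp0).mp hrm⟩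
      haveI : Fact (Irreducible p) := ⟨hirr⟩
      have hfr : Module.finrank F (AdjoinRoot p) = 2 := by
        rw [(AdjoinRoot.powerBasis hp0).finrank]
        simpa [AdjoinRoot.powerBasis] using hpd
      refine ⟨AdjoinRoot p, inferInstance, inferInstance, Or.inr hfr, ?_⟩
      refine key F K f₁ f₂ (AdjoinRoot p) (Or.inr hfr) v₁ v₂ hv hv₁ hv₂ B hB
        (AdjoinRoot.root p) 1 (Or.inr one_ne_zero) ?_
      have h0 : Polynomial.eval₂ (AdjoinRoot.of p) (AdjoinRoot.root p)
          (C (B v₁ v₁) * X ^ 2 + C (B v₁ v₂ + B v₂ v₁) * X + C (B v₂ v₂)) = 0 :=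
        AdjoinRoot.eval₂_root p
      simp only [eval₂_add, eval₂_mul, eval₂_C, eval₂_X, eval₂_pow, map_add] at h0
      rw [← AdjoinRoot.algebraMap_eq] at h0
      linear_combination h0
end

section
/- Let F be a Henselian valued field and D, E finite-dimensional division algebras over F such that: (1) D is defectless over F (i.e. [D̄:F̄]·[Γ_D:Γ_F] = [D:F]); (2) the tensor product of residue algebras D̄ ⊗_{F̄} Ē is a division algebra; (3) Γ_D ∩ Γ_E = Γ_F. Then D ⊗_F E is a division algebra. -/
open TensorProduct
open Finset

set_option maxHeartbeats 1600000

instance auxOrderBot {Γ₀ : Type} [LinearOrderedCommMonoidWithZero Γ₀] : OrderBot Γ₀ where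
  bot := 0
  bot_le := fun _ => zero_le'

lemma aux_sup_mul {Γ₀ : Type} [LinearOrderedCommGroupWithZero Γ₀] {σ : Type}
    (S : Finset σ) (f : σ → Γ₀) (c : Γ₀) : S.sup f * c = S.sup fun p => f p * c := by
  classical
  induction S using Finset.cons_induction with
  | empty => exact zero_mul c
  | cons a s ha ih => rw [Finset.sup_cons, Finset.sup_cons, ← ih, ← max_mul_mul_right]

lemma aux_val_sum {R Γ₀ : Type} [DivisionRing R] [LinearOrderedCommGroupWithZero Γ₀]
    (v : Valuation R Γ₀) (hv : ∀ x : R, v x = 0 → x = 0)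
    {σ : Type} (S : Finset σ) (t : σ → R)
    (hinj : ∀ p ∈ S, ∀ p' ∈ S, v (t p) = v (t p') → v (t p) ≠ 0 → p = p') :
    v (∑ p ∈ S, t p) = S.sup fun p => v (t p) := by
  classical
  induction S using Finset.induction_on with
  | empty => simp; rfl
  | @insert a s ha ih =>
      have hinj' : ∀ p ∈ s, ∀ p' ∈ s, v (t p) = v (t p') → v (t p) ≠ 0 → p = p' :=
        fun p hp p' hp' h h0 =>
          hinj p (Finset.mem_insert_of_mem hp) p' (Finset.mem_insert_of_mem hp') h h0
      have ihs := ih hinj'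
      rw [Finset.sum_insert ha, Finset.sup_insert]
      rcases eq_or_ne (v (t a)) (v (∑ p ∈ s, t p)) with heq | hne
      · rcases eq_or_ne (v (t a)) 0 with h0 | h0
        · have hta : t a = 0 := hv _ h0
          rw [hta, zero_add, ihs, map_zero]
          exact (sup_eq_right.mpr zero_le').symm
        · have hs0 : (s.sup fun p => v (t p)) ≠ 0 := by rw [← ihs, ← heq]; exact h0
          have hsne : s.Nonempty := by
            rcases s.eq_empty_or_nonempty with rfl | h
            · exact absurd rfl hs0
            · exact h
          obtain ⟨p', hp', hp'eq⟩ := Finset.exists_mem_eq_sup s hsne fun p => v (t p)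
          have : a = p' := by
            apply hinj a (Finset.mem_insert_self a s) p' (Finset.mem_insert_of_mem hp')
            · rw [heq, ihs, hp'eq]
            · exact h0
          exact absurd (this ▸ hp') ha
      · rw [Valuation.map_add_of_distinct_val v hne, ihs]

/-- in a tensor product over a field, if `x i` are linearly independent and
`∑ x i ⊗ y i = 0`, then all `y i = 0`. -/
lemma aux_indep_tmul {k M N ι : Type} [Field k] [AddCommGroup M] [Module k M]
    [AddCommGroup N] [Module k N] [Fintype ι] {x : ι → M}
    (hx : LinearIndependent k x) (y : ι → N)
    (h : ∑ i, x i ⊗ₜ[k] y i = 0) : ∀ i, y i = 0 := by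
  classical
  intro i
  obtain ⟨q, hq⟩ := Submodule.exists_isCompl (Submodule.span k (Set.range x))
  set p := Submodule.span k (Set.range x)
  let π : M →ₗ[k] p := p.linearProjOfIsCompl q hq
  let bs : Module.Basis ι k p := Module.Basis.span hx
  let ℓ : M →ₗ[k] k := (bs.coord i) ∘ₗ π
  have hℓ : ∀ j, ℓ (x j) = if i = j then 1 else 0 := by
    intro j
    have hmem : x j ∈ p := Submodule.subset_span ⟨j, rfl⟩
    have hπ : π (x j) = ⟨x j, hmem⟩ := Submodule.linearProjOfIsCompl_apply_left hq ⟨x j, hmem⟩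
    have hbs : bs j = ⟨x j, hmem⟩ := by
      ext; exact congrArg Subtype.val (Module.Basis.span_apply hx j)
    simp only [ℓ, LinearMap.comp_apply, hπ, ← hbs, Module.Basis.coord_apply, Module.Basis.repr_self]
    simp [Finsupp.single_apply, eq_comm]
  have := congrArg (fun z => (TensorProduct.lid k N) ((LinearMap.rTensor N ℓ) z)) h
  simp only [map_sum, LinearMap.rTensor_tmul, TensorProduct.lid_tmul, map_zero] at this
  simp only [hℓ] at this
  simpa using this


/-- The value group of a valuation on a division ring, as a subgroup of `Γ₀ˣ`. -/
def valueGroup {D Γ₀ : Type} [DivisionRing D] [LinearOrderedCommGroupWithZero Γ₀]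
    (v : Valuation D Γ₀) : Subgroup Γ₀ˣ :=
  (Units.map v.toMonoidWithZeroHom.toMonoidHom).range

section basic
variable {F : Type} [Field F] {Γ₀ : Type} [LinearOrderedCommGroupWithZero Γ₀]
    {D : Type} [DivisionRing D] [Algebra F D]

lemma aux_eq_zero (vD : Valuation D Γ₀) {x : D} (h : vD x = 0) : x = 0 := by
  by_contra hd
  have h1 := map_mul vD x x⁻¹
  rw [mul_inv_cancel₀ hd, map_one, h, zero_mul] at h1
  exact zero_ne_one h1.symm

lemma aux_smul (vF : Valuation F Γ₀) (vD : Valuation D Γ₀)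
    (hvD : ∀ a : F, vD (algebraMap F D a) = vF a) (a : F) (d : D) :
    vD (a • d) = vF a * vD d := by
  rw [Algebra.smul_def, map_mul, hvD]

end basic

/-- Morandi's theorem: Let `F` be a Henselian valued field and `D`, `E`
finite-dimensional division algebras over `F`, each equipped with the (unique)
extension of the valuation. Suppose residue algebras `D̄` (over the residue field `F̄`)
and `Ē` are given via surjective ring homomorphisms from the valuation integers with
kernel the elements of value `< 1`. If (1) `D` is defectless, i.e.
`[D̄:F̄]·[Γ_D:Γ_F] = [D:F]`, (2) `D̄ ⊗_{F̄} Ē` is a division algebra, and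
(3) `Γ_D ∩ Γ_E = Γ_F`, then `D ⊗_F E` is a division algebra. -/
theorem stmt_3 (F : Type) [Field F] (Γ₀ : Type) [LinearOrderedCommGroupWithZero Γ₀]
    (vF : Valuation F Γ₀) [HenselianLocalRing vF.valuationSubring]
    (D E : Type) [DivisionRing D] [Algebra F D] [FiniteDimensional F D]
    [DivisionRing E] [Algebra F E] [FiniteDimensional F E]
    (vD : Valuation D Γ₀) (hvD : ∀ a : F, vD (algebraMap F D a) = vF a)
    (vE : Valuation E Γ₀) (hvE : ∀ a : F, vE (algebraMap F E a) = vF a)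
    -- residue field of F
    (Fbar : Type) [Field Fbar] (ρF : vF.integer →+* Fbar)
    (hρFsurj : Function.Surjective ρF)
    (hρFker : ∀ a : vF.integer, ρF a = 0 ↔ vF (a : F) < 1)
    -- residue algebra of D
    (Dbar : Type) [Ring Dbar] [Algebra Fbar Dbar] (ρD : vD.integer →+* Dbar)
    (hρDsurj : Function.Surjective ρD)
    (hρDker : ∀ x : vD.integer, ρD x = 0 ↔ vD (x : D) < 1)
    (hρDcompat : ∀ (a : F) (ha : vF a ≤ 1) (ha' : vD (algebraMap F D a) ≤ 1),
      ρD ⟨algebraMap F D a, ha'⟩ = algebraMap Fbar Dbar (ρF ⟨a, ha⟩))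
    -- residue algebra of E
    (Ebar : Type) [Ring Ebar] [Algebra Fbar Ebar] (ρE : vE.integer →+* Ebar)
    (hρEsurj : Function.Surjective ρE)
    (hρEker : ∀ x : vE.integer, ρE x = 0 ↔ vE (x : E) < 1)
    (hρEcompat : ∀ (a : F) (ha : vF a ≤ 1) (ha' : vE (algebraMap F E a) ≤ 1),
      ρE ⟨algebraMap F E a, ha'⟩ = algebraMap Fbar Ebar (ρF ⟨a, ha⟩))
    -- (1) D is defectless
    (hdefectless : Module.finrank Fbar Dbar *
        ((valueGroup vF).relIndex (valueGroup vD)) = Module.finrank F D)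
    -- (2) D̄ ⊗ Ē is a division algebra
    (hresdiv : ∀ z : Dbar ⊗[Fbar] Ebar, z ≠ 0 → IsUnit z)
    -- (3) Γ_D ∩ Γ_E = Γ_F
    (hvalgrp : valueGroup vD ⊓ valueGroup vE = valueGroup vF) :
    ∀ z : D ⊗[F] E, z ≠ 0 → IsUnit z := by
  classical
  -- basic value facts
  have hD0 : ∀ x : D, vD x = 0 → x = 0 := fun x h => aux_eq_zero vD h
  have hE0 : ∀ x : E, vE x = 0 → x = 0 := fun x h => aux_eq_zero vE h
  have hF0 : ∀ x : F, vF x = 0 → x = 0 := fun x h => aux_eq_zero vF h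
  have hD0' : ∀ x : D, x ≠ 0 → vD x ≠ 0 := fun x h h0 => h (hD0 x h0)
  have hE0' : ∀ x : E, x ≠ 0 → vE x ≠ 0 := fun x h h0 => h (hE0 x h0)
  have hF0' : ∀ x : F, x ≠ 0 → vF x ≠ 0 := fun x h h0 => h (hF0 x h0)
  have hDsmul : ∀ (a : F) (d : D), vD (a • d) = vF a * vD d := aux_smul vF vD hvD
  have hEsmul : ∀ (a : F) (e : E), vE (a • e) = vF a * vE e := aux_smul vF vE hvE
  -- dimensions
  haveI : NoZeroSMulDivisors F D := by
    constructor
    intro a d h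
    have h2 := hDsmul a d
    rw [h, map_zero] at h2
    rcases mul_eq_zero.mp h2.symm with h3 | h3
    · exact Or.inl (hF0 a h3)
    · exact Or.inr (hD0 d h3)
  have hnpos : 0 < Module.finrank F D := Module.finrank_pos
  have hspos : 0 < Module.finrank Fbar Dbar := by
    rcases Nat.eq_zero_or_pos (Module.finrank Fbar Dbar) with h | h
    · rw [h, zero_mul] at hdefectless; omega
    · exact h
  have hrpos : 0 < (valueGroup vF).relIndex (valueGroup vD) := by
    rcases Nat.eq_zero_or_pos ((valueGroup vF).relIndex (valueGroup vD)) with h | h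
    · rw [h, mul_zero] at hdefectless; omega
    · exact h
  haveI : FiniteDimensional Fbar Dbar := FiniteDimensional.of_finrank_pos hspos
  set Q := valueGroup vD ⧸ (valueGroup vF).subgroupOf (valueGroup vD) with hQdef
  have hcardQ : Nat.card Q = (valueGroup vF).relIndex (valueGroup vD) := rfl
  have hQne : Nat.card Q ≠ 0 := by rw [hcardQ]; omega
  haveI hQfin : Finite Q := (Nat.card_ne_zero.mp hQne).2
  haveI : Fintype Q := Fintype.ofFinite Q
  haveI : Nonempty Q := (Nat.card_ne_zero.mp hQne).1
  set ι := Fin (Module.finrank Fbar Dbar) with hι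
  haveI : Nonempty ι := ⟨⟨0, hspos⟩⟩
  set dbar := Module.finBasis Fbar Dbar with hdbar
  -- lift of residue basis
  obtain ⟨b, hbρ⟩ : ∃ b : ι → vD.integer, ∀ i, ρD (b i) = dbar i :=
    ⟨fun i => (hρDsurj (dbar i)).choose, fun i => (hρDsurj (dbar i)).choose_spec⟩
  have hbv : ∀ i, vD (b i : D) = 1 := by
    intro i
    refine le_antisymm (b i).2 (not_lt.mp fun hlt => ?_)
    have h0 := (hρDker (b i)).mpr hlt
    rw [hbρ i] at h0
    exact dbar.ne_zero i h0
  -- group-theoretic setup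
  set gD : Dˣ →* Γ₀ˣ := Units.map vD.toMonoidWithZeroHom.toMonoidHom with hgD
  have hgDcoe : ∀ d : Dˣ, ((gD d : Γ₀ˣ) : Γ₀) = vD (d : D) := fun d => rfl
  have hgDmem : ∀ d : Dˣ, (gD d : Γ₀ˣ) ∈ valueGroup vD := fun d => ⟨d, rfl⟩
  set gE : Eˣ →* Γ₀ˣ := Units.map vE.toMonoidWithZeroHom.toMonoidHom with hgE
  have hgEcoe : ∀ e : Eˣ, ((gE e : Γ₀ˣ) : Γ₀) = vE (e : E) := fun e => rfl
  set gF : Fˣ →* Γ₀ˣ := Units.map vF.toMonoidWithZeroHom.toMonoidHom with hgF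
  -- coset representatives
  have hex : ∀ q : Q, ∃ d : Dˣ, gD d = ((Quotient.out q : valueGroup vD) : Γ₀ˣ) :=
    fun q => (Quotient.out q : valueGroup vD).2
  set u : Q → Dˣ := fun q => if q = 1 then 1 else (hex q).choose with hudef
  have hu1 : u 1 = 1 := if_pos rfl
  have huq : ∀ q : Q, QuotientGroup.mk (⟨gD (u q), hgDmem (u q)⟩ : valueGroup vD) = q := by
    intro q
    by_cases hq1 : q = 1
    · subst hq1
      have h1 : (⟨gD (u 1), hgDmem (u 1)⟩ : valueGroup vD) = 1 := by
        apply Subtype.ext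
        show (gD (u 1) : Γ₀ˣ) = 1
        rw [hu1, map_one]
      rw [h1]
      rfl
    · have h1 : (⟨gD (u q), hgDmem (u q)⟩ : valueGroup vD) = Quotient.out q := by
        apply Subtype.ext
        show (gD (u q) : Γ₀ˣ) = _
        rw [hudef]
        simp only [if_neg hq1]
        exact (hex q).choose_spec
      rw [h1]
      exact QuotientGroup.out_eq' q
  set vu : Q → Γ₀ := fun q => vD ((u q : Dˣ) : D) with hvu
  have hvucoe : ∀ q, vu q = ((gD (u q) : Γ₀ˣ) : Γ₀) := fun q => rfl
  have hvu0 : ∀ q, vu q ≠ 0 := fun q => by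
    rw [hvucoe q]; exact Units.ne_zero _
  have hvu1 : vu 1 = 1 := by simp [hvu, hu1]
  have hP : ∀ q q' : Q, ∀ γ : Γ₀ˣ, γ ∈ valueGroup vF →
      gD (u q) = gD (u q') * γ → q = q' := by
    intro q q' γ hγ heq
    rw [← huq q, ← huq q']
    apply (QuotientGroup.eq).mpr
    rw [Subgroup.mem_subgroupOf]
    have : ((⟨gD (u q), hgDmem (u q)⟩ : valueGroup vD)⁻¹
        * ⟨gD (u q'), hgDmem (u q')⟩ : valueGroup vD) = (⟨(gD (u q))⁻¹ * gD (u q'), _⟩ : valueGroup vD) := rfl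
    rw [this]
    show (gD (u q))⁻¹ * gD (u q') ∈ valueGroup vF
    have : (gD (u q))⁻¹ * gD (u q') = γ⁻¹ := by
      rw [heq]; group
    rw [this]
    exact inv_mem hγ
  have hPE : ∀ q q' : Q, ∀ e e' : E, e ≠ 0 → e' ≠ 0 →
      vu q * vE e = vu q' * vE e' → q = q' := by
    intro q q' e e' he he' heq
    set ε : Γ₀ˣ := gE (Units.mk0 e he) with hε
    set ε' : Γ₀ˣ := gE (Units.mk0 e' he') with hε'
    have hu : gD (u q) * ε = gD (u q') * ε' := by
      apply Units.ext
      rw [Units.val_mul, Units.val_mul, hgDcoe, hgDcoe, hgEcoe, hgEcoe]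
      exact heq
    set γ : Γ₀ˣ := ε' * ε⁻¹ with hγdef
    have h2 : gD (u q') * γ = gD (u q) := by
      rw [hγdef]
      calc gD (u q') * (ε' * ε⁻¹) = (gD (u q') * ε') * ε⁻¹ := by group
        _ = (gD (u q) * ε) * ε⁻¹ := by rw [hu]
        _ = gD (u q) := by group
    have hγD : γ ∈ valueGroup vD := by
      have h3 : γ = (gD (u q'))⁻¹ * gD (u q) := by rw [← h2]; group
      rw [h3]
      exact mul_mem (inv_mem (hgDmem _)) (hgDmem _)
    have hγE : γ ∈ valueGroup vE := mul_mem ⟨Units.mk0 e' he', rfl⟩ (inv_mem ⟨Units.mk0 e he, rfl⟩)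
    have hγF : γ ∈ valueGroup vF := by
      rw [← hvalgrp]; exact ⟨hγD, hγE⟩
    exact hP q q' γ hγF h2.symm
  have hPF : ∀ q : Q, ∀ a : F, a ≠ 0 → vu q = vF a → q = 1 := by
    intro q a ha heq
    have hae : algebraMap F E a ≠ 0 := by
      intro h
      apply hF0' a ha
      rw [← hvE a, h, map_zero]
    apply hPE q 1 1 (algebraMap F E a) one_ne_zero hae
    rw [map_one, mul_one, hvu1, one_mul, hvE]
    exact heq
  have hPF2 : ∀ (q q' : Q) (c c' : F), c ≠ 0 → c' ≠ 0 →
      vu q * vF c = vu q' * vF c' → q = q' := by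
    intro q q' c c' hc hc' heq
    have h1 : algebraMap F E c ≠ 0 := fun h => hF0' c hc (by rw [← hvE c, h, map_zero])
    have h1' : algebraMap F E c' ≠ 0 := fun h => hF0' c' hc' (by rw [← hvE c', h, map_zero])
    exact hPE q q' _ _ h1 h1' (by rw [hvE, hvE]; exact heq)
  -- integrality transfers
  have hcD : ∀ x : F, vF x ≤ 1 → vD (algebraMap F D x) ≤ 1 := fun x h => by rw [hvD]; exact h
  have hcE : ∀ x : F, vF x ≤ 1 → vE (algebraMap F E x) ≤ 1 := fun x h => by rw [hvE]; exact h
  -- valuation of F-combinations of the lifted residue basis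
  have hL1 : ∀ a : ι → F, vD (∑ i, a i • (b i : D)) = univ.sup fun i => vF (a i) := by
    intro a
    rcases eq_or_ne a 0 with rfl | hne
    · simp only [Pi.zero_apply, zero_smul, Finset.sum_const_zero, map_zero]
      exact (Finset.sup_const univ_nonempty (0:Γ₀)).symm
    · obtain ⟨i₀, -, hmax⟩ := Finset.exists_mem_eq_sup (univ : Finset ι) univ_nonempty
        (fun i => vF (a i))
      have ha₀ : a i₀ ≠ 0 := by
        intro h0
        obtain ⟨j, hj⟩ := Function.ne_iff.mp hne
        apply hF0' (a j) hj
        have hle := Finset.le_sup (f := fun i => vF (a i)) (mem_univ j)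
        rw [hmax, h0, map_zero] at hle
        exact le_antisymm hle zero_le'
      have hva₀ : vF (a i₀) ≠ 0 := hF0' _ ha₀
      have hle1 : ∀ i, vF (a i / a i₀) ≤ 1 := by
        intro i
        rw [show vF (a i / a i₀) = vF (a i) / vF (a i₀) from map_div₀ vF _ _, div_eq_mul_inv]
        have hle2 : vF (a i) ≤ vF (a i₀) := by
          rw [← hmax]; exact Finset.le_sup (f := fun i => vF (a i)) (mem_univ i)
        calc vF (a i) * (vF (a i₀))⁻¹ ≤ vF (a i₀) * (vF (a i₀))⁻¹ := mul_le_mul_left hle2 _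
          _ = 1 := mul_inv_cancel₀ hva₀
      set t : vD.integer :=
        ∑ i, (⟨algebraMap F D (a i / a i₀), hcD _ (hle1 i)⟩ : vD.integer) * b i with ht
      have hρt : ρD t = ∑ i, (ρF ⟨a i / a i₀, hle1 i⟩) • dbar i := by
        rw [ht, map_sum]
        refine Finset.sum_congr rfl fun i _ => ?_
        rw [map_mul, hρDcompat _ (hle1 i), hbρ i, Algebra.smul_def]
      have hρt0 : ρD t ≠ 0 := by
        rw [hρt]
        intro h0
        have hli := Fintype.linearIndependent_iff.mp dbar.linearIndependent _ h0 i₀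
        have h1 : (⟨a i₀ / a i₀, hle1 i₀⟩ : vF.integer) = 1 := Subtype.ext (div_self ha₀)
        rw [h1, map_one] at hli
        exact one_ne_zero hli
      have hvt : vD (t : D) = 1 :=
        le_antisymm t.2 (not_lt.mp fun hlt => hρt0 ((hρDker t).mpr hlt))
      have hsum : ∑ i, a i • (b i : D) = a i₀ • (t : D) := by
        have hco : ((t : D)) = ∑ i, algebraMap F D (a i / a i₀) * (b i : D) := by
          rw [ht]
          push_cast
          rfl
        rw [hco, Finset.smul_sum]
        refine Finset.sum_congr rfl fun i _ => ?_
        rw [← Algebra.smul_def, smul_smul]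
        congr 1
        field_simp
      rw [hsum, hDsmul, hvt, mul_one, ← hmax]
  -- full valuation formula
  have hA1 : ∀ aa : Q × ι → F,
      vD (∑ m : Q × ι, aa m • ((b m.2 : D) * ((u m.1 : Dˣ) : D)))
        = univ.sup (fun m : Q × ι => vF (aa m) * vu m.1) := by
    intro aa
    have hsplit : ∑ m : Q × ι, aa m • ((b m.2 : D) * ((u m.1 : Dˣ) : D))
        = ∑ q : Q, (∑ i : ι, aa (q, i) • (b i : D)) * ((u q : Dˣ) : D) := by
      rw [← Finset.univ_product_univ, Finset.sum_product]
      refine Finset.sum_congr rfl fun q _ => ?_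
      rw [Finset.sum_mul]
      exact Finset.sum_congr rfl fun i _ => (smul_mul_assoc _ _ _).symm
    have hTval : ∀ q : Q, vD ((∑ i : ι, aa (q, i) • (b i : D)) * ((u q : Dˣ) : D))
        = (univ.sup fun i => vF (aa (q, i))) * vu q := by
      intro q; rw [map_mul, hL1 (fun i => aa (q, i))]
    rw [hsplit, aux_val_sum vD hD0 univ _ ?hinj]
    case hinj =>
      intro p _ p' _ hvv hnz
      rw [hTval, hTval] at hvv
      rw [hTval] at hnz
      have hnz' : (univ.sup fun i => vF (aa (p', i))) * vu p' ≠ 0 := by rw [← hvv]; exact hnz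
      have hsupp : (univ.sup fun i => vF (aa (p, i))) ≠ 0 :=
        fun h => hnz (by rw [h, zero_mul])
      have hsupp' : (univ.sup fun i => vF (aa (p', i))) ≠ 0 :=
        fun h => hnz' (by rw [h, zero_mul])
      obtain ⟨ip, -, hip⟩ := Finset.exists_mem_eq_sup (univ : Finset ι) univ_nonempty
        (fun i => vF (aa (p, i)))
      obtain ⟨ip', -, hip'⟩ := Finset.exists_mem_eq_sup (univ : Finset ι) univ_nonempty
        (fun i => vF (aa (p', i)))
      refine hPF2 p p' (aa (p, ip)) (aa (p', ip')) ?_ ?_ ?_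
      · intro h; apply hsupp; rw [hip, h, map_zero]
      · intro h; apply hsupp'; rw [hip', h, map_zero]
      · rw [mul_comm, ← hip, hvv, hip', mul_comm]
    · have h1 : ∀ q ∈ (univ : Finset Q),
          vD ((∑ i : ι, aa (q, i) • (b i : D)) * ((u q : Dˣ) : D))
            = univ.sup (fun i => vF (aa (q,i)) * vu q) := fun q _ => by
        rw [hTval, aux_sup_mul]
      rw [Finset.sup_congr rfl h1, ← Finset.univ_product_univ, Finset.sup_product_left]
  -- the adapted basis of D
  have hlin : LinearIndependent F (fun m : Q × ι => (b m.2 : D) * ((u m.1 : Dˣ) : D)) := by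
    rw [Fintype.linearIndependent_iff]
    intro g hg m
    have h0 := hA1 g
    rw [hg, map_zero] at h0
    have hle := Finset.le_sup (f := fun m : Q × ι => vF (g m) * vu m.1) (mem_univ m)
    rw [← h0] at hle
    have hz : vF (g m) * vu m.1 = 0 := le_antisymm hle zero_le'
    rcases mul_eq_zero.mp hz with h | h
    · exact hF0 _ h
    · exact absurd h (hvu0 _)
  have hcard : Fintype.card (Q × ι) = Module.finrank F D := by
    rw [Fintype.card_prod, Fintype.card_fin, ← Nat.card_eq_fintype_card, hcardQ,
      ← hdefectless]
    ring
  set β : Module.Basis (Q × ι) F D := basisOfLinearIndependentOfCardEqFinrank hlin hcard with hβ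
  have hβa : ∀ m : Q × ι, β m = (b m.2 : D) * ((u m.1 : Dˣ) : D) := fun m => by
    rw [hβ, coe_basisOfLinearIndependentOfCardEqFinrank]
  have hβv : ∀ m : Q × ι, vD (β m) = vu m.1 := fun m => by
    rw [hβa, map_mul, hbv, one_mul]
  have hA1β : ∀ d : D, vD d = univ.sup fun m : Q × ι => vF (β.repr d m) * vu m.1 := by
    intro d
    conv_lhs => rw [← Module.Basis.sum_equivFun β d]
    have h1 : ∑ m : Q × ι, β.equivFun d m • β m
        = ∑ m : Q × ι, β.equivFun d m • ((b m.2 : D) * ((u m.1 : Dˣ) : D)) :=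
      Finset.sum_congr rfl fun m _ => by rw [hβa]
    rw [h1, hA1]
    simp only [Module.Basis.equivFun_apply]
  -- coordinates of D ⊗ E and the value function w
  set φ : D ⊗[F] E ≃ₗ[F] ((Q × ι) →₀ E) := TensorProduct.equivFinsuppOfBasisLeft β with hφ
  have hφtmul : ∀ (d : D) (e : E) (m : Q × ι), φ (d ⊗ₜ[F] e) m = β.repr d m • e :=
    fun d e m => TensorProduct.equivFinsuppOfBasisLeft_apply_tmul_apply β d e m
  set w : D ⊗[F] E → Γ₀ := fun x => univ.sup fun m : Q × ι => vu m.1 * vE (φ x m) with hw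
  have hwle : ∀ (x : D ⊗[F] E) (m : Q × ι), vu m.1 * vE (φ x m) ≤ w x :=
    fun x m => Finset.le_sup (f := fun m : Q × ι => vu m.1 * vE (φ x m)) (mem_univ m)
  have hwzero : w 0 = 0 := by
    show univ.sup (fun m : Q × ι => vu m.1 * vE (φ (0 : D ⊗[F] E) m)) = 0
    have h1 : ∀ m ∈ (univ : Finset (Q × ι)), vu m.1 * vE (φ (0 : D ⊗[F] E) m) = 0 :=
      fun m _ => by rw [map_zero, Finsupp.zero_apply, map_zero, mul_zero]
    rw [Finset.sup_congr rfl h1, Finset.sup_const univ_nonempty]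
  have hwne : ∀ x : D ⊗[F] E, x ≠ 0 → w x ≠ 0 := by
    intro x hx hw0
    apply hx
    have hco : ∀ m : Q × ι, φ x m = 0 := by
      intro m
      have h1 := hwle x m
      rw [hw0] at h1
      have h2 : vu m.1 * vE (φ x m) = 0 := le_antisymm h1 zero_le'
      rcases mul_eq_zero.mp h2 with h | h
      · exact absurd h (hvu0 _)
      · exact hE0 _ h
    have hφx : φ x = 0 := Finsupp.ext hco
    have := φ.injective (by rw [hφx, map_zero] : φ x = φ 0)
    exact this
  -- sum of coordinates of a sum of pure tensors
  have hφsum : ∀ {σ : Type} (S : Finset σ) (d : σ → D) (e : σ → E) (m : Q × ι),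
      φ (∑ p ∈ S, d p ⊗ₜ[F] e p) m = ∑ p ∈ S, β.repr (d p) m • e p := by
    intro σ S d e m
    rw [map_sum, Finsupp.finset_sum_apply]
    exact Finset.sum_congr rfl fun p _ => hφtmul _ _ _
  -- upper bound for w of a sum of pure tensors
  have hW0 : ∀ {σ : Type} (S : Finset σ) (d : σ → D) (e : σ → E),
      w (∑ p ∈ S, d p ⊗ₜ[F] e p) ≤ S.sup fun p => vD (d p) * vE (e p) := by
    intro σ S d e
    apply Finset.sup_le
    intro m _
    rw [hφsum S d e m]
    have h1 : vE (∑ p ∈ S, β.repr (d p) m • e p)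
        ≤ S.sup fun p => vF (β.repr (d p) m) * vE (e p) := by
      apply Valuation.map_sum_le
      intro p hp
      rw [hEsmul]
      exact Finset.le_sup (f := fun p => vF (β.repr (d p) m) * vE (e p)) hp
    calc vu m.1 * vE (∑ p ∈ S, β.repr (d p) m • e p)
        ≤ vu m.1 * S.sup (fun p => vF (β.repr (d p) m) * vE (e p)) := mul_le_mul_right h1 _
      _ = S.sup (fun p => (vF (β.repr (d p) m) * vE (e p)) * vu m.1) := by
          rw [mul_comm, aux_sup_mul]
      _ ≤ S.sup (fun p => vD (d p) * vE (e p)) := by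
          apply Finset.sup_mono_fun
          intro p _
          have h2 : vF (β.repr (d p) m) * vu m.1 ≤ vD (d p) := by
            rw [hA1β (d p)]
            exact Finset.le_sup (f := fun m : Q × ι => vF (β.repr (d p) m) * vu m.1)
              (mem_univ m)
          calc vF (β.repr (d p) m) * vE (e p) * vu m.1
              = (vF (β.repr (d p) m) * vu m.1) * vE (e p) := mul_right_comm _ _ _
            _ ≤ vD (d p) * vE (e p) := mul_le_mul_left h2 _
  -- value of a pure tensor
  have hW1 : ∀ (d : D) (e : E), w (d ⊗ₜ[F] e) = vD d * vE e := by
    intro d e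
    rcases eq_or_ne d 0 with rfl | hd
    · rw [TensorProduct.zero_tmul, hwzero, map_zero, zero_mul]
    rcases eq_or_ne e 0 with rfl | he
    · rw [TensorProduct.tmul_zero, hwzero, map_zero, mul_zero]
    apply le_antisymm
    · apply Finset.sup_le
      intro m _
      rw [hφtmul, hEsmul]
      have h2 : vF (β.repr d m) * vu m.1 ≤ vD d := by
        rw [hA1β d]
        exact Finset.le_sup (f := fun m : Q × ι => vF (β.repr d m) * vu m.1) (mem_univ m)
      calc vu m.1 * (vF (β.repr d m) * vE e) = (vF (β.repr d m) * vu m.1) * vE e := by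
            rw [← mul_assoc, mul_comm (vu m.1) (vF (β.repr d m))]
        _ ≤ vD d * vE e := mul_le_mul_left h2 _
    · obtain ⟨m, -, hm⟩ := Finset.exists_mem_eq_sup (univ : Finset (Q × ι)) univ_nonempty
        (fun m : Q × ι => vF (β.repr d m) * vu m.1)
      have h3 := hwle (d ⊗ₜ[F] e) m
      rw [hφtmul, hEsmul] at h3
      calc vD d * vE e = (vF (β.repr d m) * vu m.1) * vE e := by rw [hA1β d, hm]
        _ = vu m.1 * (vF (β.repr d m) * vE e) := by
            rw [← mul_assoc, mul_comm (vF (β.repr d m)) (vu m.1)]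
        _ ≤ w (d ⊗ₜ[F] e) := h3
  -- ultrametric property of w
  have hwadd : ∀ x y : D ⊗[F] E, w y < w x → w (x + y) = w x := by
    intro x y hlt
    apply le_antisymm
    · apply Finset.sup_le
      intro m _
      have h1 : φ (x + y) m = φ x m + φ y m := by rw [map_add, Finsupp.add_apply]
      rw [h1]
      calc vu m.1 * vE (φ x m + φ y m) ≤ vu m.1 * max (vE (φ x m)) (vE (φ y m)) :=
            mul_le_mul_right (Valuation.map_add vE _ _) _
        _ = max (vu m.1 * vE (φ x m)) (vu m.1 * vE (φ y m)) := by
            rcases le_total (vE (φ x m)) (vE (φ y m)) with h | h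
            · rw [max_eq_right h, max_eq_right (mul_le_mul_right h _)]
            · rw [max_eq_left h, max_eq_left (mul_le_mul_right h _)]
        _ ≤ max (w x) (w y) := max_le_max (hwle x m) (hwle y m)
        _ = w x := max_eq_left (le_of_lt hlt)
    · obtain ⟨m, -, hm⟩ := Finset.exists_mem_eq_sup (univ : Finset (Q × ι)) univ_nonempty
        (fun m : Q × ι => vu m.1 * vE (φ x m))
      have hxm : w x = vu m.1 * vE (φ x m) := hm
      have hym : vE (φ y m) < vE (φ x m) := by
        apply lt_of_not_ge
        intro hle
        have := mul_le_mul_right hle (vu m.1)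
        rw [← hxm] at this
        exact absurd (lt_of_lt_of_le hlt (le_trans this (hwle y m))) (lt_irrefl _)
      have h1 : φ (x + y) m = φ x m + φ y m := by rw [map_add, Finsupp.add_apply]
      have h2 : vE (φ (x + y) m) = vE (φ x m) := by
        rw [h1]
        exact Valuation.map_add_eq_of_lt_left vE hym
      calc w x = vu m.1 * vE (φ (x + y) m) := by rw [hxm, h2]
        _ ≤ w (x + y) := hwle _ m
  -- reconstruction of an element from coordinates
  have hrec : ∀ x : D ⊗[F] E, x = ∑ m : Q × ι, β m ⊗ₜ[F] φ x m := by
    intro x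
    conv_lhs => rw [← LinearEquiv.symm_apply_apply φ x]
    rw [TensorProduct.equivFinsuppOfBasisLeft_symm_apply β (φ x)]
    exact Finsupp.sum_fintype (φ x) (fun m e => β m ⊗ₜ[F] e)
      (fun m => TensorProduct.tmul_zero _ _)
  -- submultiplicativity
  have hCmul : ∀ x y : D ⊗[F] E, w (x * y) ≤ w x * w y := by
    intro x y
    have hxy : x * y = ∑ p ∈ (univ ×ˢ univ : Finset ((Q × ι) × (Q × ι))),
        (β p.1 * β p.2) ⊗ₜ[F] (φ x p.1 * φ y p.2) := by
      conv_lhs => rw [hrec x, hrec y]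
      rw [Finset.sum_mul_sum, Finset.sum_product]
      exact Finset.sum_congr rfl fun m _ => Finset.sum_congr rfl fun m' _ =>
        Algebra.TensorProduct.tmul_mul_tmul _ _ _ _
    rw [hxy]
    refine le_trans (hW0 _ _ _) ?_
    apply Finset.sup_le
    intro p _
    rw [map_mul, hβv p.1, hβv p.2, map_mul]
    calc vu p.1.1 * vu p.2.1 * (vE (φ x p.1) * vE (φ y p.2))
        = (vu p.1.1 * vE (φ x p.1)) * (vu p.2.1 * vE (φ y p.2)) := mul_mul_mul_comm _ _ _ _
      _ ≤ w x * w y := mul_le_mul' (hwle x p.1) (hwle y p.2)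
  -- multiplicativity for right multiplication by a nonzero pure tensor
  have hMright : ∀ (x : D ⊗[F] E) (d : D) (e : E), d ≠ 0 → e ≠ 0 →
      w (x * (d ⊗ₜ[F] e)) = w x * (vD d * vE e) := by
    intro x d e hd he
    have hDinv : vD d⁻¹ = (vD d)⁻¹ := by
      apply eq_inv_of_mul_eq_one_left
      rw [← map_mul, inv_mul_cancel₀ hd, map_one]
    have hEinv : vE e⁻¹ = (vE e)⁻¹ := by
      apply eq_inv_of_mul_eq_one_left
      rw [← map_mul, inv_mul_cancel₀ he, map_one]
    apply le_antisymm
    · refine le_trans (hCmul _ _) ?_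
      rw [hW1]
    · have hx : x = (x * (d ⊗ₜ[F] e)) * (d⁻¹ ⊗ₜ[F] e⁻¹) := by
        rw [mul_assoc, Algebra.TensorProduct.tmul_mul_tmul, mul_inv_cancel₀ hd,
          mul_inv_cancel₀ he, ← Algebra.TensorProduct.one_def, mul_one]
      have h1 : w x ≤ w (x * (d ⊗ₜ[F] e)) * (vD d⁻¹ * vE e⁻¹) := by
        conv_lhs => rw [hx]
        refine le_trans (hCmul _ _) ?_
        rw [hW1]
      have h2 := mul_le_mul_left h1 (vD d * vE e)
      rw [mul_assoc, hDinv, hEinv] at h2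
      have h3 : (vD d)⁻¹ * (vE e)⁻¹ * (vD d * vE e) = 1 := by
        rw [mul_mul_mul_comm, inv_mul_cancel₀ (hD0' d hd), inv_mul_cancel₀ (hE0' e he), one_mul]
      rw [h3, mul_one] at h2
      exact h2
  -- β at the identity coset is just b
  have hβ1 : ∀ i : ι, β ((1 : Q), i) = (b i : D) := fun i => by
    rw [hβa]
    show (b i : D) * ((u 1 : Dˣ) : D) = (b i : D)
    rw [hu1, Units.val_one, mul_one]
  have hbound : ∀ (dd : D) (m : Q × ι), vF (β.repr dd m) * vu m.1 ≤ vD dd := by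
    intro dd m
    have h1 := Finset.le_sup (f := fun m : Q × ι => vF (β.repr dd m) * vu m.1) (mem_univ m)
    rw [← hA1β] at h1
    exact h1
  -- THE RESIDUE LEMMA: an integral combination with nonzero residue has value 1
  have hres : ∀ (σ : Type) [Fintype σ] (d : σ → vD.integer) (s : σ → vE.integer),
      (∑ p : σ, ρD (d p) ⊗ₜ[Fbar] ρE (s p)) ≠ 0 →
      w (∑ p : σ, (d p : D) ⊗ₜ[F] (s p : E)) = 1 := by
    intro σ _ d s hne
    set cc : σ → ι → F := fun p i => β.repr ((d p : D)) (1, i) with hccdef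
    have hciF : ∀ p i, vF (cc p i) ≤ 1 := by
      intro p i
      have h1 : vF (cc p i) * vu 1 ≤ vD (d p : D) := hbound (d p : D) (1, i)
      rw [hvu1, mul_one] at h1
      exact le_trans h1 (d p).2
    -- residue of each d p only sees the identity-coset coordinates
    have hρd : ∀ p, ρD (d p) = ∑ i, ρF ⟨cc p i, hciF p i⟩ • ρD (b i) := by
      intro p
      set tt : vD.integer :=
        ∑ i, (⟨algebraMap F D (cc p i), hcD _ (hciF p i)⟩ : vD.integer) * b i with htt
      set aa' : Q × ι → F := fun m => if m.1 = 1 then 0 else β.repr (d p : D) m with haa'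
      have httD : (tt : D) = ∑ i, β.repr (d p : D) (1, i) • β ((1 : Q), i) := by
        rw [htt]
        push_cast
        refine Finset.sum_congr rfl fun i _ => ?_
        rw [hβ1 i, ← Algebra.smul_def]
      have htt2 : (tt : D) = ∑ m : Q × ι,
          (if m.1 = (1 : Q) then β.repr (d p : D) m • β m else 0) := by
        rw [httD, ← Finset.univ_product_univ, Finset.sum_product]
        have h4 : ∀ q : Q, (∑ i : ι, if (q, i).1 = (1:Q) then β.repr (d p : D) (q,i) • β (q,i) else 0)
            = if q = 1 then (∑ i : ι, β.repr (d p : D) (q,i) • β (q,i)) else 0 := by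
          intro q
          by_cases hq : q = 1
          · simp [hq]
          · simp only [if_neg hq, Finset.sum_const_zero]
        rw [Finset.sum_congr rfl fun q _ => h4 q, Finset.sum_ite_eq' univ (1:Q)
          (fun q => ∑ i : ι, β.repr (d p : D) (q,i) • β (q,i))]
        simp
      have hd1 : (d p : D) - (tt : D)
          = ∑ m : Q × ι, aa' m • ((b m.2 : D) * ((u m.1 : Dˣ) : D)) := by
        have h5 : (d p : D) = ∑ m : Q × ι, β.repr (d p : D) m • β m := by
          conv_lhs => rw [← Module.Basis.sum_equivFun β ((d p) : D)]
          exact Finset.sum_congr rfl fun m _ => by rw [Module.Basis.equivFun_apply]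
        rw [h5, htt2, ← Finset.sum_sub_distrib]
        refine Finset.sum_congr rfl fun m _ => ?_
        by_cases hm : m.1 = 1
        · rw [if_pos hm, sub_self, haa']
          simp only [if_pos hm, zero_smul]
        · rw [if_neg hm, sub_zero, haa', hβa]
          simp only [if_neg hm]
      have hεlt : vD ((d p : D) - (tt : D)) < 1 := by
        rw [hd1, hA1 aa']
        apply Finset.sup_lt_iff (by exact lt_of_le_of_ne zero_le' (Ne.symm one_ne_zero) :
          (⊥:Γ₀) < 1) |>.mpr
        intro m _
        by_cases hm : m.1 = 1
        · rw [haa']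
          simp only [if_pos hm, map_zero, zero_mul]
          exact lt_of_le_of_ne zero_le' (Ne.symm one_ne_zero)
        · rw [haa']
          simp only [if_neg hm]
          refine lt_of_le_of_ne (le_trans (hbound (d p : D) m) (d p).2) fun heq1 => ?_
          have hc0 : β.repr (d p : D) m ≠ 0 := by
            intro h0
            rw [h0, map_zero, zero_mul] at heq1
            exact one_ne_zero heq1.symm
          set c := β.repr (d p : D) m with hc
          have h6 : vu m.1 = (vF c)⁻¹ := by
            apply eq_inv_of_mul_eq_one_left
            rw [mul_comm]
            exact heq1
          have h7 : vF c⁻¹ = (vF c)⁻¹ := by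
            apply eq_inv_of_mul_eq_one_left
            rw [← map_mul, inv_mul_cancel₀ hc0, map_one]
          exact hm (hPF m.1 c⁻¹ (inv_ne_zero hc0) (by rw [h6, h7]))
      have hρε : ρD (d p - tt) = 0 := (hρDker _).mpr hεlt
      have h8 : d p = tt + (d p - tt) := by abel
      rw [h8, map_add, hρε, add_zero, htt, map_sum]
      exact Finset.sum_congr rfl fun i _ => by
        rw [map_mul, hρDcompat _ (hciF p i), Algebra.smul_def]
    -- rearrange the residue sum
    have hswap : ∑ p : σ, ρD (d p) ⊗ₜ[Fbar] ρE (s p)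
        = ∑ i : ι, ρD (b i) ⊗ₜ[Fbar] (∑ p : σ, ρF ⟨cc p i, hciF p i⟩ • ρE (s p)) := by
      rw [Finset.sum_congr rfl fun p _ => by rw [hρd p]]
      have h9 : ∀ p : σ, (∑ i, ρF ⟨cc p i, hciF p i⟩ • ρD (b i)) ⊗ₜ[Fbar] ρE (s p)
          = ∑ i, ρD (b i) ⊗ₜ[Fbar] (ρF ⟨cc p i, hciF p i⟩ • ρE (s p)) := by
        intro p
        rw [TensorProduct.sum_tmul]
        exact Finset.sum_congr rfl fun i _ => TensorProduct.smul_tmul _ _ _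
      rw [Finset.sum_congr rfl fun p _ => h9 p, Finset.sum_comm]
      exact Finset.sum_congr rfl fun i _ => (TensorProduct.tmul_sum _ _ _).symm
    have hexi : ∃ i : ι, (∑ p : σ, ρF ⟨cc p i, hciF p i⟩ • ρE (s p)) ≠ 0 := by
      by_contra hall
      push_neg at hall
      apply hne
      rw [hswap]
      exact Finset.sum_eq_zero fun i _ => by rw [hall i, TensorProduct.tmul_zero]
    obtain ⟨i0, hi0⟩ := hexi
    set G : vE.integer :=
      ∑ p : σ, (⟨algebraMap F E (cc p i0), hcE _ (hciF p i0)⟩ : vE.integer) * s p with hG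
    have hρG : ρE G = ∑ p, ρF ⟨cc p i0, hciF p i0⟩ • ρE (s p) := by
      rw [hG, map_sum]
      exact Finset.sum_congr rfl fun p _ => by
        rw [map_mul, hρEcompat _ (hciF p i0), Algebra.smul_def]
    have hρG0 : ρE G ≠ 0 := by rw [hρG]; exact hi0
    have hvG : vE (G : E) = 1 :=
      le_antisymm G.2 (not_lt.mp fun hlt => hρG0 ((hρEker G).mpr hlt))
    have hGco : (G : E) = φ (∑ p : σ, (d p : D) ⊗ₜ[F] (s p : E)) ((1 : Q), i0) := by
      rw [hφsum, hG]
      push_cast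
      exact Finset.sum_congr rfl fun p _ => by rw [← Algebra.smul_def]
    apply le_antisymm
    · refine le_trans (hW0 univ _ _) (Finset.sup_le fun p _ => mul_le_one' (d p).2 (s p).2)
    · have h5 := hwle (∑ p : σ, (d p : D) ⊗ₜ[F] (s p : E)) ((1 : Q), i0)
      calc (1:Γ₀) = vu 1 * vE (G : E) := by rw [hvu1, hvG, one_mul]
        _ = vu ((1:Q), i0).1 * vE (φ (∑ p : σ, (d p : D) ⊗ₜ[F] (s p : E)) ((1 : Q), i0)) := by
            rw [hGco]
        _ ≤ w (∑ p : σ, (d p : D) ⊗ₜ[F] (s p : E)) := h5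
  -- general subadditivity of w
  have hwaddle : ∀ x y : D ⊗[F] E, w (x + y) ≤ max (w x) (w y) := by
    intro x y
    apply Finset.sup_le
    intro m _
    have h1 : φ (x + y) m = φ x m + φ y m := by rw [map_add, Finsupp.add_apply]
    rw [h1]
    calc vu m.1 * vE (φ x m + φ y m) ≤ vu m.1 * max (vE (φ x m)) (vE (φ y m)) :=
          mul_le_mul_right (Valuation.map_add vE _ _) _
      _ = max (vu m.1 * vE (φ x m)) (vu m.1 * vE (φ y m)) := by
          rcases le_total (vE (φ x m)) (vE (φ y m)) with h | h
          · rw [max_eq_right h, max_eq_right (mul_le_mul_right h _)]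
          · rw [max_eq_left h, max_eq_left (mul_le_mul_right h _)]
      _ ≤ max (w x) (w y) := max_le_max (hwle x m) (hwle y m)
  -- strict monotonicity of multiplication in Γ₀
  have hstrictl : ∀ (c a a' : Γ₀), c ≠ 0 → a < a' → c * a < c * a' := by
    intro c a a' hc h
    refine lt_of_le_of_ne (mul_le_mul_right (le_of_lt h) _) fun heq => ?_
    exact absurd (mul_left_cancel₀ hc heq) (ne_of_lt h)
  have hstrictr : ∀ (c a a' : Γ₀), c ≠ 0 → a < a' → a * c < a' * c := by
    intro c a a' hc h
    rw [mul_comm a c, mul_comm a' c]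
    exact hstrictl c a a' hc h
  -- conjugates of the lifted residue basis stay independent
  have hconj : ∀ q₀ : Q, ∃ b' : ι → vD.integer,
      (∀ j, (b' j : D) = ((u q₀ : Dˣ) : D) * (b j : D) * (((u q₀ : Dˣ) : D))⁻¹) ∧
      (∀ j, vD (b' j : D) = 1) ∧
      LinearIndependent Fbar (fun j => ρD (b' j)) := by
    intro q₀
    have hU0 : ((u q₀ : Dˣ) : D) ≠ 0 := Units.ne_zero _
    have hvconj : ∀ x : D, vD (((u q₀ : Dˣ) : D) * x * (((u q₀ : Dˣ) : D))⁻¹) = vD x := by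
      intro x
      rw [map_mul, map_mul]
      have h1 : vD (((u q₀ : Dˣ) : D))⁻¹ = (vD ((u q₀ : Dˣ) : D))⁻¹ := by
        apply eq_inv_of_mul_eq_one_left
        rw [← map_mul, inv_mul_cancel₀ hU0, map_one]
      rw [h1, mul_right_comm, mul_inv_cancel₀ (hD0' _ hU0), one_mul]
    have hmem : ∀ j, vD (((u q₀ : Dˣ) : D) * (b j : D) * (((u q₀ : Dˣ) : D))⁻¹) ≤ 1 := by
      intro j; rw [hvconj, hbv]
    refine ⟨fun j => ⟨_, hmem j⟩, fun j => rfl, fun j => by rw [hvconj, hbv], ?_⟩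
    rw [Fintype.linearIndependent_iff]
    intro g hg j
    obtain ⟨A, hA⟩ : ∃ A : ι → vF.integer, ∀ j, ρF (A j) = g j :=
      ⟨fun j => (hρFsurj (g j)).choose, fun j => (hρFsurj (g j)).choose_spec⟩
    set T : vD.integer := ∑ j, (⟨algebraMap F D ((A j : F)), hcD _ (A j).2⟩ : vD.integer)
      * ⟨_, hmem j⟩ with hT
    have hρT : ρD T = 0 := by
      rw [hT, map_sum]
      rw [show (0 : Dbar) = ∑ j, g j • ρD (⟨_, hmem j⟩ : vD.integer) from hg.symm]
      refine Finset.sum_congr rfl fun j _ => ?_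
      rw [map_mul, hρDcompat _ (A j).2, Algebra.smul_def, ← hA j]
    have hTD : (T : D) = ((u q₀ : Dˣ) : D) * (∑ j, (A j : F) • (b j : D))
        * (((u q₀ : Dˣ) : D))⁻¹ := by
      rw [hT]
      push_cast
      rw [Finset.mul_sum, Finset.sum_mul]
      refine Finset.sum_congr rfl fun j _ => ?_
      rw [Algebra.smul_def, ← mul_assoc, ← mul_assoc,
        Algebra.commutes ((A j : F)) (((u q₀ : Dˣ)) : D),
        mul_assoc (((u q₀ : Dˣ)) : D) (algebraMap F D ((A j : F))) ((b j : D))]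
    have hvT : vD (T : D) < 1 := by
      have := (hρDker T).mp hρT
      exact this
    rw [hTD, hvconj, hL1] at hvT
    have h2 : vF ((A j : F)) < 1 := lt_of_le_of_lt
      (Finset.le_sup (f := fun j => vF ((A j : F))) (mem_univ j)) hvT
    rw [← hA j]
    exact (hρFker (A j)).mpr h2
  -- leading part extraction
  have hlead : ∀ x : D ⊗[F] E, x ≠ 0 → ∃ (q₀ : Q) (S : Finset ι) (x₂ : D ⊗[F] E),
      S.Nonempty ∧
      (∀ i ∈ S, vu q₀ * vE (φ x (q₀, i)) = w x) ∧
      w x₂ < w x ∧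
      x = (∑ i ∈ S, β (q₀, i) ⊗ₜ[F] φ x (q₀, i)) + x₂ := by
    intro x hx
    have hγ0 : w x ≠ 0 := hwne x hx
    obtain ⟨m₀, -, hm₀⟩ := Finset.exists_mem_eq_sup (univ : Finset (Q × ι)) univ_nonempty
      (fun m : Q × ι => vu m.1 * vE (φ x m))
    have hxm : w x = vu m₀.1 * vE (φ x m₀) := hm₀
    have hφm₀ : φ x m₀ ≠ 0 := by
      intro h0; apply hγ0; rw [hxm, h0, map_zero, mul_zero]
    have huniq : ∀ m : Q × ι, vu m.1 * vE (φ x m) = w x → m.1 = m₀.1 := by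
      intro m hm
      have hφm : φ x m ≠ 0 := by
        intro h0; apply hγ0; rw [← hm, h0, map_zero, mul_zero]
      exact hPE m.1 m₀.1 (φ x m) (φ x m₀) hφm hφm₀ (by rw [hm, hxm])
    set S : Finset ι := univ.filter (fun i => vu m₀.1 * vE (φ x (m₀.1, i)) = w x) with hSdef
    have hm₀S : m₀.2 ∈ S := by
      rw [hSdef, Finset.mem_filter]
      exact ⟨mem_univ _, hxm.symm⟩
    set x₁ : D ⊗[F] E := ∑ i ∈ S, β (m₀.1, i) ⊗ₜ[F] φ x (m₀.1, i) with hx₁def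
    refine ⟨m₀.1, S, x - x₁, ⟨m₀.2, hm₀S⟩, ?_, ?_, by abel⟩
    · intro i hiS
      rw [hSdef, Finset.mem_filter] at hiS
      exact hiS.2
    · have hφx₁ : ∀ m : Q × ι, φ x₁ m = if m.1 = m₀.1 ∧ m.2 ∈ S then φ x m else 0 := by
        intro m
        rw [hx₁def, hφsum]
        have h2 : ∀ i ∈ S, β.repr (β (m₀.1, i)) m • φ x (m₀.1, i)
            = if (m₀.1, i) = m then φ x (m₀.1, i) else 0 := by
          intro i _
          rw [Module.Basis.repr_self, Finsupp.single_apply]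
          by_cases h : (m₀.1, i) = m
          · rw [if_pos h, if_pos h, one_smul]
          · rw [if_neg h, if_neg h, zero_smul]
        rw [Finset.sum_congr rfl h2]
        by_cases hm1 : m.1 = m₀.1
        · have h3 : ∀ i : ι, ((m₀.1, i) = m) ↔ (i = m.2) := by
            intro i
            constructor
            · intro h; rw [← h]
            · intro h; exact Prod.ext_iff.mpr ⟨hm1.symm, h⟩
          have h4 : ∀ i ∈ S, (if (m₀.1, i) = m then φ x (m₀.1, i) else 0)
              = if i = m.2 then φ x (m₀.1, i) else 0 := by
            intro i _
            simp only [h3 i]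
          rw [Finset.sum_congr rfl h4, Finset.sum_ite_eq' S m.2 (fun i => φ x (m₀.1, i))]
          have h5 : (m₀.1, m.2) = m := Prod.ext_iff.mpr ⟨hm1.symm, rfl⟩
          by_cases hm2 : m.2 ∈ S
          · rw [if_pos hm2, if_pos ⟨hm1, hm2⟩, h5]
          · rw [if_neg hm2, if_neg (fun hc => hm2 hc.2)]
        · have h4 : ∀ i ∈ S, (if (m₀.1, i) = m then φ x (m₀.1, i) else 0) = 0 := by
            intro i _
            rw [if_neg (fun hc => hm1 (by rw [← hc]))]
          rw [Finset.sum_congr rfl h4, Finset.sum_const_zero,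
            if_neg (fun hc => hm1 hc.1)]
      apply (Finset.sup_lt_iff (show (⊥:Γ₀) < w x from
        lt_of_le_of_ne zero_le' (Ne.symm hγ0))).mpr
      intro m _
      show vu m.1 * vE (φ (x - x₁) m) < w x
      have hφd : φ (x - x₁) m = φ x m - φ x₁ m := by rw [map_sub, Finsupp.sub_apply]
      by_cases hc : m.1 = m₀.1 ∧ m.2 ∈ S
      · rw [hφd, hφx₁ m, if_pos hc, sub_self, map_zero, mul_zero]
        exact lt_of_le_of_ne zero_le' (Ne.symm hγ0)
      · rw [hφd, hφx₁ m, if_neg hc, sub_zero]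
        refine lt_of_le_of_ne (hwle x m) fun heq => ?_
        have hm1 := huniq m heq
        apply hc
        refine ⟨hm1, ?_⟩
        rw [hSdef, Finset.mem_filter]
        refine ⟨mem_univ _, ?_⟩
        have h5 : (m₀.1, m.2) = m := Prod.ext_iff.mpr ⟨hm1.symm, rfl⟩
        rw [h5, ← hm1]
        exact heq
  -- linear independence of the residues of b
  have hlinB : LinearIndependent Fbar (fun i => ρD (b i)) := by
    have h1 : (fun i => ρD (b i)) = fun i => dbar i := funext hbρ
    rw [h1]
    exact dbar.linearIndependent
  -- THE MAIN STEP: the product of nonzero elements is nonzero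
  have hmulne : ∀ x y : D ⊗[F] E, x ≠ 0 → y ≠ 0 → x * y ≠ 0 := by
    intro x y hx hy
    have hγ0 : w x ≠ 0 := hwne x hx
    have hδ0 : w y ≠ 0 := hwne y hy
    obtain ⟨q₀, S, x₂, ⟨i₀, hi₀⟩, hSval, hx₂, hxdec⟩ := hlead x hx
    obtain ⟨q₁, T, y₂, ⟨j₀, hj₀⟩, hTval, hy₂, hydec⟩ := hlead y hy
    set e₀ : E := φ x (q₀, i₀) with he₀def
    set f₀ : E := φ y (q₁, j₀) with hf₀def
    have hγ : w x = vu q₀ * vE e₀ := (hSval i₀ hi₀).symm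
    have hδ : w y = vu q₁ * vE f₀ := (hTval j₀ hj₀).symm
    have hvε0 : vE e₀ ≠ 0 := fun h => hγ0 (by rw [hγ, h, mul_zero])
    have he₀ : e₀ ≠ 0 := fun h => hvε0 (by rw [h, map_zero])
    have hvζ0 : vE f₀ ≠ 0 := fun h => hδ0 (by rw [hδ, h, mul_zero])
    have hf₀ : f₀ ≠ 0 := fun h => hvζ0 (by rw [h, map_zero])
    have hEinv : ∀ e : E, e ≠ 0 → vE e⁻¹ = (vE e)⁻¹ := fun e he =>
      eq_inv_of_mul_eq_one_left (by rw [← map_mul, inv_mul_cancel₀ he, map_one])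
    have hvES : ∀ i ∈ S, vE (φ x (q₀, i)) = vE e₀ := fun i hi =>
      mul_left_cancel₀ (hvu0 q₀) (by rw [hSval i hi, hγ])
    have hvET : ∀ j ∈ T, vE (φ y (q₁, j)) = vE f₀ := fun j hj =>
      mul_left_cancel₀ (hvu0 q₁) (by rw [hTval j hj, hδ])
    -- all coordinates in column q₀ are bounded by vE e₀
    have hvESle : ∀ i : ι, vE (φ x (q₀, i)) ≤ vE e₀ := by
      intro i
      by_contra hlt
      have h1 := hstrictl (vu q₀) _ _ (hvu0 q₀) (lt_of_not_ge hlt)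
      rw [← hγ] at h1
      exact absurd (hwle x (q₀, i)) (not_le_of_gt h1)
    have hvETle : ∀ j : ι, vE (φ y (q₁, j)) ≤ vE f₀ := by
      intro j
      by_contra hlt
      have h1 := hstrictl (vu q₁) _ _ (hvu0 q₁) (lt_of_not_ge hlt)
      rw [← hδ] at h1
      exact absurd (hwle y (q₁, j)) (not_le_of_gt h1)
    obtain ⟨b', hb'coe, hb'v, hb'ind⟩ := hconj q₀
    have hU₀ : ((u q₀ : Dˣ) : D) ≠ 0 := Units.ne_zero _
    have hU₁ : ((u q₁ : Dˣ) : D) ≠ 0 := Units.ne_zero _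
    -- normalized E-parts, as integers
    have heev : ∀ i : ι, vE (φ x (q₀, i) * e₀⁻¹) = vE (φ x (q₀, i)) * (vE e₀)⁻¹ := by
      intro i; rw [map_mul, hEinv _ he₀]
    have heele : ∀ i : ι, vE (φ x (q₀, i) * e₀⁻¹) ≤ 1 := by
      intro i
      rw [heev i]
      calc vE (φ x (q₀, i)) * (vE e₀)⁻¹ ≤ vE e₀ * (vE e₀)⁻¹ :=
            mul_le_mul_left (hvESle i) _
        _ = 1 := mul_inv_cancel₀ hvε0
    have heeu : ∀ i ∈ S, vE (φ x (q₀, i) * e₀⁻¹) = 1 := by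
      intro i hi
      rw [heev i, hvES i hi, mul_inv_cancel₀ hvε0]
    have hffv : ∀ j : ι, vE (e₀ * (φ y (q₁, j) * f₀⁻¹) * e₀⁻¹)
        = vE (φ y (q₁, j)) * (vE f₀)⁻¹ := by
      intro j
      rw [map_mul, map_mul, map_mul, hEinv _ he₀, hEinv _ hf₀,
        mul_comm (vE e₀), mul_assoc, mul_inv_cancel₀ hvε0, mul_one]
    have hffle : ∀ j : ι, vE (e₀ * (φ y (q₁, j) * f₀⁻¹) * e₀⁻¹) ≤ 1 := by
      intro j
      rw [hffv j]
      calc vE (φ y (q₁, j)) * (vE f₀)⁻¹ ≤ vE f₀ * (vE f₀)⁻¹ :=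
            mul_le_mul_left (hvETle j) _
        _ = 1 := mul_inv_cancel₀ hvζ0
    have hffu : ∀ j ∈ T, vE (e₀ * (φ y (q₁, j) * f₀⁻¹) * e₀⁻¹) = 1 := by
      intro j hj
      rw [hffv j, hvET j hj, mul_inv_cancel₀ hvζ0]
    set eeInt : ι → vE.integer := fun i => ⟨φ x (q₀, i) * e₀⁻¹, heele i⟩ with heeInt
    set ffInt : ι → vE.integer := fun j => ⟨e₀ * (φ y (q₁, j) * f₀⁻¹) * e₀⁻¹, hffle j⟩
      with hffInt
    -- the two residue factors are nonzero
    have hρee : ∀ i ∈ S, ρE (eeInt i) ≠ 0 := by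
      intro i hi h0
      have h1 := (hρEker _).mp h0
      rw [show ((eeInt i : vE.integer) : E) = φ x (q₀, i) * e₀⁻¹ from rfl] at h1
      rw [heeu i hi] at h1
      exact lt_irrefl _ h1
    have hρff : ∀ j ∈ T, ρE (ffInt j) ≠ 0 := by
      intro j hj h0
      have h1 := (hρEker _).mp h0
      rw [show ((ffInt j : vE.integer) : E) = e₀ * (φ y (q₁, j) * f₀⁻¹) * e₀⁻¹ from rfl] at h1
      rw [hffu j hj] at h1
      exact lt_irrefl _ h1
    have hF1 : (∑ i ∈ S, ρD (b i) ⊗ₜ[Fbar] ρE (eeInt i)) ≠ 0 := by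
      intro h0
      have h6 : ∑ i : ι, ρD (b i) ⊗ₜ[Fbar] (if i ∈ S then ρE (eeInt i) else 0) = 0 := by
        have h7 : ∀ i : ι, ρD (b i) ⊗ₜ[Fbar] (if i ∈ S then ρE (eeInt i) else 0)
            = if i ∈ S then ρD (b i) ⊗ₜ[Fbar] ρE (eeInt i) else 0 := by
          intro i
          by_cases h : i ∈ S
          · rw [if_pos h, if_pos h]
          · rw [if_neg h, if_neg h, TensorProduct.tmul_zero]
        rw [Finset.sum_congr rfl fun i _ => h7 i, Finset.sum_ite_mem, Finset.univ_inter, h0]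
      have h8 := aux_indep_tmul hlinB _ h6 i₀
      rw [if_pos hi₀] at h8
      exact hρee i₀ hi₀ h8
    have hF2 : (∑ j ∈ T, ρD (b' j) ⊗ₜ[Fbar] ρE (ffInt j)) ≠ 0 := by
      intro h0
      have h6 : ∑ j : ι, ρD (b' j) ⊗ₜ[Fbar] (if j ∈ T then ρE (ffInt j) else 0) = 0 := by
        have h7 : ∀ j : ι, ρD (b' j) ⊗ₜ[Fbar] (if j ∈ T then ρE (ffInt j) else 0)
            = if j ∈ T then ρD (b' j) ⊗ₜ[Fbar] ρE (ffInt j) else 0 := by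
          intro j
          by_cases h : j ∈ T
          · rw [if_pos h, if_pos h]
          · rw [if_neg h, if_neg h, TensorProduct.tmul_zero]
        rw [Finset.sum_congr rfl fun j _ => h7 j, Finset.sum_ite_mem, Finset.univ_inter, h0]
      have h8 := aux_indep_tmul hb'ind _ h6 j₀
      rw [if_pos hj₀] at h8
      exact hρff j₀ hj₀ h8
    -- assemble the integral element Z
    set σt := {p : ι × ι // p ∈ S ×ˢ T} with hσt
    set dd : σt → vD.integer := fun p => b (p : ι × ι).1 * b' (p : ι × ι).2 with hdd
    set ss : σt → vE.integer := fun p => eeInt (p : ι × ι).1 * ffInt (p : ι × ι).2 with hss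
    have hZres : (∑ p : σt, ρD (dd p) ⊗ₜ[Fbar] ρE (ss p)) ≠ 0 := by
      have h9 : (∑ p : σt, ρD (dd p) ⊗ₜ[Fbar] ρE (ss p))
          = (∑ i ∈ S, ρD (b i) ⊗ₜ[Fbar] ρE (eeInt i))
            * (∑ j ∈ T, ρD (b' j) ⊗ₜ[Fbar] ρE (ffInt j)) := by
        rw [Finset.sum_mul_sum, Finset.sum_coe_sort (S ×ˢ T)
          (fun p => ρD (b p.1 * b' p.2) ⊗ₜ[Fbar] ρE (eeInt p.1 * ffInt p.2)),
          Finset.sum_product]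
        refine Finset.sum_congr rfl fun i _ => Finset.sum_congr rfl fun j _ => ?_
        rw [map_mul, map_mul, Algebra.TensorProduct.tmul_mul_tmul]
      rw [h9]
      intro h0
      exact hF2 (((hresdiv _ hF1).mul_right_eq_zero).mp h0)
    have hZval := hres σt dd ss hZres
    -- the algebraic identity x₁ * y₁ = Z * ((U₀ * U₁) ⊗ (e₀ * f₀))
    have hkey : (∑ i ∈ S, β (q₀, i) ⊗ₜ[F] φ x (q₀, i)) * (∑ j ∈ T, β (q₁, j) ⊗ₜ[F] φ y (q₁, j))
        = (∑ p : σt, ((dd p : vD.integer) : D) ⊗ₜ[F] ((ss p : vE.integer) : E))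
          * ((((u q₀ : Dˣ) : D) * ((u q₁ : Dˣ) : D)) ⊗ₜ[F] (e₀ * f₀)) := by
      rw [Finset.sum_mul_sum, Finset.sum_mul,
        Finset.sum_coe_sort (S ×ˢ T) (fun p => (((b p.1 * b' p.2 : vD.integer) : D)
          ⊗ₜ[F] ((eeInt p.1 * ffInt p.2 : vE.integer) : E))
          * ((((u q₀ : Dˣ) : D) * ((u q₁ : Dˣ) : D)) ⊗ₜ[F] (e₀ * f₀))),
        Finset.sum_product]
      refine Finset.sum_congr rfl fun i _ => Finset.sum_congr rfl fun j _ => ?_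
      rw [Algebra.TensorProduct.tmul_mul_tmul, Algebra.TensorProduct.tmul_mul_tmul]
      congr 1
      · -- D side
        show β (q₀, i) * β (q₁, j) = ((b i : D) * (b' j : D)) * (((u q₀ : Dˣ) : D) * ((u q₁ : Dˣ) : D))
        rw [hβa, hβa, hb'coe j]
        simp only [mul_assoc]
        rw [inv_mul_cancel_left₀ hU₀]
      · -- E side
        show φ x (q₀, i) * φ y (q₁, j)
            = ((φ x (q₀, i) * e₀⁻¹) * (e₀ * (φ y (q₁, j) * f₀⁻¹) * e₀⁻¹)) * (e₀ * f₀)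
        simp only [mul_assoc]
        rw [inv_mul_cancel_left₀ he₀, inv_mul_cancel_left₀ he₀, inv_mul_cancel₀ hf₀, mul_one]
    -- w of the leading product
    have hw11 : w ((∑ i ∈ S, β (q₀, i) ⊗ₜ[F] φ x (q₀, i))
        * (∑ j ∈ T, β (q₁, j) ⊗ₜ[F] φ y (q₁, j))) = w x * w y := by
      rw [hkey, hMright _ _ _ (mul_ne_zero hU₀ hU₁) (mul_ne_zero he₀ hf₀), hZval, one_mul,
        map_mul, map_mul]
      rw [hγ, hδ]
      show vu q₀ * vu q₁ * (vE e₀ * vE f₀) = vu q₀ * vE e₀ * (vu q₁ * vE f₀)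
      exact mul_mul_mul_comm _ _ _ _
    -- bound the remainder
    have hwx₁ : w (∑ i ∈ S, β (q₀, i) ⊗ₜ[F] φ x (q₀, i)) ≤ w x := by
      refine le_trans (hW0 S _ _) (Finset.sup_le fun i hi => ?_)
      rw [hβv]
      exact le_of_eq (hSval i hi)
    have hrest : w ((∑ i ∈ S, β (q₀, i) ⊗ₜ[F] φ x (q₀, i)) * y₂ + x₂ * y) < w x * w y := by
      apply lt_of_le_of_lt (hwaddle _ _)
      apply max_lt
      · apply lt_of_le_of_lt (hCmul _ _)
        calc w (∑ i ∈ S, β (q₀, i) ⊗ₜ[F] φ x (q₀, i)) * w y₂ ≤ w x * w y₂ :=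
              mul_le_mul_left hwx₁ _
          _ < w x * w y := hstrictl _ _ _ hγ0 hy₂
      · apply lt_of_le_of_lt (hCmul _ _)
        exact hstrictr _ _ _ hδ0 hx₂
    have hxy : x * y = (∑ i ∈ S, β (q₀, i) ⊗ₜ[F] φ x (q₀, i))
        * (∑ j ∈ T, β (q₁, j) ⊗ₜ[F] φ y (q₁, j))
        + ((∑ i ∈ S, β (q₀, i) ⊗ₜ[F] φ x (q₀, i)) * y₂ + x₂ * y) := by
      generalize hA : (∑ i ∈ S, β (q₀, i) ⊗ₜ[F] φ x (q₀, i)) = A at hxdec ⊢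
      generalize hB : (∑ j ∈ T, β (q₁, j) ⊗ₜ[F] φ y (q₁, j)) = B at hydec ⊢
      rw [hxdec, hydec]
      noncomm_ring
    have hwxy : w (x * y) = w x * w y := by
      rw [hxy, hwadd _ _ (by rw [hw11]; exact hrest), hw11]
    intro h0
    apply mul_ne_zero hγ0 hδ0
    rw [← hwxy, h0, hwzero]
  -- conclusion: D ⊗ E is a division ring
  intro z hz
  haveI : FiniteDimensional F (D ⊗[F] E) := Module.Finite.tensorProduct F D E
  have hinj : Function.Injective (LinearMap.mulLeft F z) := by
    intro a c hac
    have h1 : z * (a - c) = 0 := by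
      rw [mul_sub]
      rw [show (LinearMap.mulLeft F z) a = z * a from rfl,
        show (LinearMap.mulLeft F z) c = z * c from rfl] at hac
      rw [hac, sub_self]
    by_contra hne
    exact hmulne z (a - c) hz (sub_ne_zero.mpr hne) h1
  obtain ⟨a, ha⟩ := (LinearMap.injective_iff_surjective.mp hinj) 1
  rw [show (LinearMap.mulLeft F z) a = z * a from rfl] at ha
  have ha2 : a * z = 1 := by
    have h2 : z * (a * z - 1) = 0 := by
      rw [mul_sub, ← mul_assoc, ha, one_mul, mul_one, sub_self]
    have h3 : a * z - 1 = 0 := by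
      by_contra hne
      exact hmulne z _ hz hne h2
    rw [sub_eq_zero] at h3
    exact h3
  exact ⟨⟨z, a, ha, ha2⟩, rfl⟩
end

section
/- Let F be a field of characteristic 2, and let [α,β)_{2,F} and [α,γ)_{2,F} be division quaternion algebras over F. The two algebras share a purely inseparable quadratic subfield F[√δ] (are inseparably linked) if and only if γ is a value of the reduced norm form [1,α] ⊥ β[1,α] of [α,β)_{2,F}. Equivalently, the quadratic form ⟨1⟩ ⊥ β[1,α] ⊥ γ[1,α] is isotropic over F if and only if γ is represented by [1,α] ⊥ β[1,α]. -/
set_option linter.unusedSectionVars false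
set_option maxHeartbeats 1000000

lemma h2F (F : Type) [Field F] [CharP F 2] : (2:F) = 0 := by
  exact_mod_cast CharP.cast_eq_zero F 2

lemma addself (F : Type) [Field F] [CharP F 2] {A : Type} [Ring A] [Algebra F A]
    (a : A) : a + a = 0 := by
  have h : (2:A) = 0 := by
    rw [show (2:A) = algebraMap F A 2 from (map_ofNat (algebraMap F A) 2).symm, h2F F, map_zero]
  calc a + a = 2 * a := (two_mul a).symm
  _ = 0 := by rw [h, zero_mul]

section
variable (F : Type) [Field F] [CharP F 2]
variable {A : Type} [Ring A] [Algebra F A] {α β : F} {x y : A}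
variable (hx : x^2 + x = algebraMap F A α) (hy : y^2 = algebraMap F A β)
  (hyx : y * x = (x+1)*y)

include hx in
lemma hxx : x * x = algebraMap F A α + x := by
  rw [pow_two] at hx
  calc x*x = (x*x + x) + x := by rw [add_assoc, addself F, add_zero]
  _ = algebraMap F A α + x := by rw [hx]

include hy in
lemma hyy : y * y = algebraMap F A β := by rw [← pow_two, hy]

include hyx in
lemma hyx' : y * x = x*y + y := by rw [hyx]; noncomm_ring

include hx in
lemma hxz : x * (x*y) = algebraMap F A α * y + x*y := by
  rw [← mul_assoc, hxx F hx, add_mul]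

include hy hyx in
lemma hyz : y * (x*y) = algebraMap F A β * x + algebraMap F A β := by
  rw [← mul_assoc, hyx' hyx, add_mul, mul_assoc, hyy F hy, ← Algebra.commutes]

include hy in
lemma hzy : (x*y) * y = algebraMap F A β * x := by
  rw [mul_assoc, hyy F hy, ← Algebra.commutes]

include hx hyx in
lemma hzx : (x*y) * x = algebraMap F A α * y := by
  rw [mul_assoc, hyx' hyx, mul_add, hxz F hx, add_assoc, addself F, add_zero]

include hx hy hyx in
lemma hzz : (x*y) * (x*y) = algebraMap F A (α*β) := by
  rw [mul_assoc, hyz F hy hyx, mul_add, ← mul_assoc, ← Algebra.commutes,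
    mul_assoc, hxx F hx, mul_add, add_assoc, addself F, add_zero,
    ← map_mul, mul_comm β α]

include hx hy hyx in
lemma span_top (htop : Algebra.adjoin F {x, y} = ⊤) :
    ⊤ ≤ Submodule.span F (Set.range ![(1:A), x, y, x*y]) := by
  set M := Submodule.span F (Set.range ![(1:A), x, y, x*y]) with hM
  have h1 : (1:A) ∈ M := Submodule.subset_span ⟨0, rfl⟩
  have hxM : x ∈ M := Submodule.subset_span ⟨1, rfl⟩
  have hyM : y ∈ M := Submodule.subset_span ⟨2, rfl⟩
  have hzM : x*y ∈ M := Submodule.subset_span ⟨3, rfl⟩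
  have hφ : ∀ r : F, algebraMap F A r ∈ M := by
    intro r
    rw [Algebra.algebraMap_eq_smul_one]; exact M.smul_mem _ h1
  have hφm : ∀ (r : F) (w : A), w ∈ M → algebraMap F A r * w ∈ M := by
    intro r w hw
    rw [← Algebra.smul_def]; exact M.smul_mem _ hw
  have hmul : M * M ≤ M := by
    rw [hM, Submodule.span_mul_span]
    apply Submodule.span_le.2
    rintro w ⟨p, hp, q, hq, rfl⟩
    obtain ⟨i, rfl⟩ := hp
    obtain ⟨j, rfl⟩ := hq
    fin_cases i <;> fin_cases j <;>
      simp only [show ((⟨0,by norm_num⟩ : Fin 4)) = 0 from rfl,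
        show ((⟨1,by norm_num⟩ : Fin 4)) = 1 from rfl,
        show ((⟨2,by norm_num⟩ : Fin 4)) = 2 from rfl,
        show ((⟨3,by norm_num⟩ : Fin 4)) = 3 from rfl,
        Matrix.cons_val_zero, Matrix.cons_val_one, Matrix.head_cons,
        Matrix.cons_val_two, Matrix.tail_cons, Matrix.cons_val_three,
        one_mul, mul_one]
    · exact h1
    · exact hxM
    · exact hyM
    · exact hzM
    · exact hxM
    · rw [hxx F hx]; exact M.add_mem (hφ α) hxM
    · exact hzM
    · rw [hxz F hx]; exact M.add_mem (hφm α y hyM) hzM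
    · exact hyM
    · rw [hyx' hyx]; exact M.add_mem hzM hyM
    · rw [hyy F hy]; exact hφ β
    · rw [hyz F hy hyx]; exact M.add_mem (hφm β x hxM) (hφ β)
    · exact hzM
    · rw [hzx F hx hyx]; exact hφm α y hyM
    · rw [hzy F hy]; exact hφm β x hxM
    · rw [hzz F hx hy hyx]; exact hφ _
  have hS : Algebra.adjoin F ({x, y} : Set A) ≤
      M.toSubalgebra h1 (fun p q hp hq => hmul (Submodule.mul_mem_mul hp hq)) := by
    apply Algebra.adjoin_le
    intro a ha
    rcases ha with rfl | ha
    · exact hxM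
    · rw [Set.mem_singleton_iff] at ha; subst ha; exact hyM
  rw [htop] at hS
  exact fun w _ => hS Algebra.mem_top

include hx hy hyx in
lemma indep4 (htop : Algebra.adjoin F {x, y} = ⊤) (hrank : Module.finrank F A = 4) :
    LinearIndependent F ![(1:A), x, y, x*y] := by
  have hcard : Fintype.card (Fin 4) = Module.finrank F A := by simp [hrank]
  have hb := coe_basisOfTopLeSpanOfCardEqFinrank ![(1:A), x, y, x*y]
    (span_top F hx hy hyx htop) hcard
  have := (basisOfTopLeSpanOfCardEqFinrank ![(1:A), x, y, x*y]
    (span_top F hx hy hyx htop) hcard).linearIndependent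
  rwa [hb] at this

lemma coeffs4 (hind : LinearIndependent F ![(1:A), x, y, x*y]) (a b c d : F)
    (h : algebraMap F A a + algebraMap F A b * x + algebraMap F A c * y
        + algebraMap F A d * (x*y) = 0) :
    a = 0 ∧ b = 0 ∧ c = 0 ∧ d = 0 := by
  have key := Fintype.linearIndependent_iff.mp hind ![a, b, c, d] ?_
  · exact ⟨key 0, key 1, key 2, key 3⟩
  · rw [Fin.sum_univ_four]
    simpa [Algebra.smul_def] using h

end


section
variable (F : Type) [Field F] [CharP F 2]
variable {A : Type} [Ring A] [Algebra F A] {α β : F} {x y : A}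
variable (hx : x^2 + x = algebraMap F A α) (hy : y^2 = algebraMap F A β)
  (hyx : y * x = (x+1)*y)

include hx hy hyx in
lemma sq_full (a b c d : F) :
    (a • (1:A) + b • x + c • y + d • (x*y))^2
      = (a^2 + α*b^2 + β*(c^2 + c*d + α*d^2)) • (1:A) + (b^2) • x + (b*c) • y
        + (b*d) • (x*y) := by
  have e1 : x*x = α • (1:A) + x := by
    rw [hxx F hx, Algebra.algebraMap_eq_smul_one]
  have e2 : y*y = β • (1:A) := by rw [hyy F hy, Algebra.algebraMap_eq_smul_one]
  have e3 : y*x = x*y + y := hyx' hyx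
  have e4 : x*(x*y) = α • y + x*y := by rw [hxz F hx, Algebra.smul_def]
  have e5 : y*(x*y) = β • x + β • (1:A) := by
    rw [hyz F hy hyx, Algebra.smul_def, Algebra.algebraMap_eq_smul_one]
  have e6 : (x*y)*y = β • x := by rw [hzy F hy, Algebra.smul_def]
  have e7 : (x*y)*x = α • y := by rw [hzx F hx hyx, Algebra.smul_def]
  have e8 : (x*y)*(x*y) = (α*β) • (1:A) := by
    rw [hzz F hx hy hyx, Algebra.algebraMap_eq_smul_one]
  rw [pow_two]
  simp only [mul_add, add_mul, smul_mul_assoc, mul_smul_comm, smul_smul,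
    one_mul, mul_one, e1, e2, e3, e4, e5, e6, e7, e8, smul_add]
  match_scalars
  all_goals try ring1
  · linear_combination (a*b + β*c*d) * h2F F
  · linear_combination (a*c + α*b*d) * h2F F
  · linear_combination (a*d + b*c) * h2F F

end


lemma nm_conj (F : Type) [Field F] [CharP F 2] (α c d : F) :
    (c+d)^2 + (c+d)*d + α*d^2 = c^2+c*d+α*d^2 := by
  linear_combination (c*d+d^2) * (h2F F)

lemma nm_inv (F : Type) [Field F] [CharP F 2] (α s t : F)
    (hk : s^2 + s*t + α*t^2 ≠ 0) :
    ∃ p q : F, (p^2 + p*q + α*q^2) * (s^2 + s*t + α*t^2) = 1 := by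
  refine ⟨(s+t)/(s^2+s*t+α*t^2), t/(s^2+s*t+α*t^2), ?_⟩
  have key : ((s+t)/(s^2+s*t+α*t^2))^2 + ((s+t)/(s^2+s*t+α*t^2))*(t/(s^2+s*t+α*t^2))
      + α*(t/(s^2+s*t+α*t^2))^2
      = ((s+t)^2 + (s+t)*t + α*t^2) * (1/(s^2+s*t+α*t^2)) * (1/(s^2+s*t+α*t^2)) := by
    ring
  rw [key, nm_conj F α s t]
  field_simp
  exact div_self (fun h => hk (by linear_combination h))

section
variable (F : Type) [Field F] [CharP F 2]
variable {A : Type} [Ring A] [Algebra F A] {α β : F} {x y : A}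
variable (hx : x^2 + x = algebraMap F A α) (hy : y^2 = algebraMap F A β)
  (hyx : y * x = (x+1)*y)

lemma coeffs4' (hind : LinearIndependent F ![(1:A), x, y, x*y]) (a b c d : F)
    (h : a • (1:A) + b • x + c • y + d • (x*y) = 0) :
    a = 0 ∧ b = 0 ∧ c = 0 ∧ d = 0 := by
  apply coeffs4 F hind
  simpa [Algebra.smul_def] using h

include hx hy hyx in
lemma sqrt_char (htop : Algebra.adjoin F {x, y} = ⊤)
    (hrank : Module.finrank F A = 4) (δ : F) :
    (∃ w : A, w ∉ Set.range (algebraMap F A) ∧ w ^ 2 = algebraMap F A δ) ↔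
    ∃ a c d : F, ¬(c = 0 ∧ d = 0) ∧ δ = a^2 + β*(c^2 + c*d + α*d^2) := by
  have hind := indep4 F hx hy hyx htop hrank
  constructor
  · rintro ⟨w, hwr, hw2⟩
    have hsp : w ∈ Submodule.span F (Set.range ![(1:A), x, y, x*y]) :=
      span_top F hx hy hyx htop Submodule.mem_top
    rw [Submodule.mem_span_range_iff_exists_fun] at hsp
    obtain ⟨g, hg⟩ := hsp
    rw [Fin.sum_univ_four] at hg
    simp only [Matrix.cons_val_zero, Matrix.cons_val_one, Matrix.head_cons,
      Matrix.cons_val_two, Matrix.tail_cons, Matrix.cons_val_three] at hg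
    have hsq := sq_full F hx hy hyx (g 0) (g 1) (g 2) (g 3)
    rw [hg] at hsq
    have hw2' : w^2 = δ • (1:A) := by
      rw [hw2, Algebra.algebraMap_eq_smul_one]
    rw [hw2'] at hsq
    have h0 : ((g 0^2 + α*(g 1)^2 + β*((g 2)^2 + (g 2)*(g 3) + α*(g 3)^2)) - δ) • (1:A)
        + ((g 1)^2) • x + ((g 1)*(g 2)) • y + ((g 1)*(g 3)) • (x*y) = 0 := by
      rw [sub_smul, hsq]
      abel
    obtain ⟨h1, h2, h3, h4⟩ := coeffs4' F hind _ _ _ _ h0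
    have hb : g 1 = 0 := by
      have := pow_eq_zero_iff (n := 2) (by norm_num) |>.mp h2
      exact this
    refine ⟨g 0, g 2, g 3, ?_, ?_⟩
    · rintro ⟨hc0, hd0⟩
      apply hwr
      refine ⟨g 0, ?_⟩
      rw [hb, hc0, hd0] at hg
      simp only [zero_smul, add_zero] at hg
      rw [Algebra.algebraMap_eq_smul_one]
      exact hg
    · have := sub_eq_zero.mp h1
      rw [hb] at this
      linear_combination -this
  · rintro ⟨a, c, d, hcd, rfl⟩
    refine ⟨a • (1:A) + c • y + d • (x*y), ?_, ?_⟩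
    · rintro ⟨e, he⟩
      apply hcd
      have he' : e • (1:A) = a • (1:A) + c • y + d • (x*y) := by
        rw [← Algebra.algebraMap_eq_smul_one]; exact he
      have h0 : (a - e) • (1:A) + (0:F) • x + c • y + d • (x*y) = 0 := by
        rw [sub_smul, zero_smul, he']
        abel
      obtain ⟨-, -, h3, h4⟩ := coeffs4' F hind _ _ _ _ h0
      exact ⟨h3, h4⟩
    · have hsq := sq_full F hx hy hyx a 0 c d
      simp only [zero_smul, add_zero, zero_mul, mul_zero] at hsq
      rw [hsq, Algebra.algebraMap_eq_smul_one]
      norm_num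

include hx hy hyx in
lemma aniso (htop : Algebra.adjoin F {x, y} = ⊤)
    (hrank : Module.finrank F A = 4) (hdiv : ∀ a : A, a ≠ 0 → IsUnit a)
    (c d : F) (h : c^2 + c*d + α*d^2 = 0) : c = 0 ∧ d = 0 := by
  have hind := indep4 F hx hy hyx htop hrank
  by_cases hd : d = 0
  · subst hd
    refine ⟨?_, rfl⟩
    have : c^2 = 0 := by linear_combination h
    exact pow_eq_zero_iff (n := 2) (by norm_num) |>.mp this
  · exfalso
    have he : (c/d)^2 + (c/d) = α := by
      have hne : d^2 ≠ 0 := pow_ne_zero 2 hd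
      have hed : (c/d)*d = c := div_mul_cancel₀ c hd
      have step : ((c/d)^2+(c/d))*d^2 = α*d^2 := by
        have expand : ((c/d)^2+(c/d))*d^2 = ((c/d)*d)^2 + ((c/d)*d)*d := by ring
        rw [expand, hed]
        linear_combination h + (-(α*d^2))*(h2F F)
      exact mul_right_cancel₀ hne step
    set e := c/d with hedef
    have e1 : x*x = α • (1:A) + x := by
      rw [hxx F hx, Algebra.algebraMap_eq_smul_one]
    have hu : (x + e • (1:A)) * (x + e • (1:A) + 1) = 0 := by
      have expand : (x + e • (1:A)) * (x + e • (1:A) + 1)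
          = x*x + (e*e) • (1:A) + (2*e) • x + x + e • (1:A) := by
        simp only [mul_add, add_mul, smul_mul_assoc, mul_smul_comm, smul_smul,
          mul_one, one_mul]
        match_scalars <;> ring
      rw [expand, e1]
      match_scalars
      · linear_combination he + α * (h2F F)
      · linear_combination (e+1) * (h2F F)
    rcases eq_or_ne (x + e • (1:A)) 0 with h1 | h1
    · have h0 : e • (1:A) + (1:F) • x + (0:F) • y + (0:F) • (x*y) = 0 := by
        simp only [one_smul, zero_smul, add_zero]
        rw [add_comm] at h1
        exact h1
      exact one_ne_zero (coeffs4' F hind _ _ _ _ h0).2.1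
    · have hu2 : x + e • (1:A) + 1 = 0 :=
        (IsUnit.mul_right_eq_zero (hdiv _ h1)).mp hu
      have h0 : (e + 1) • (1:A) + (1:F) • x + (0:F) • y + (0:F) • (x*y) = 0 := by
        simp only [one_smul, zero_smul, add_zero, add_smul]
        rw [← hu2]
        abel
      exact one_ne_zero (coeffs4' F hind _ _ _ _ h0).2.1

include hx hy hyx in
lemma not_norm (htop : Algebra.adjoin F {x, y} = ⊤)
    (hrank : Module.finrank F A = 4) (hdiv : ∀ a : A, a ≠ 0 → IsUnit a)
    (p q : F) (hβ : β = p^2 + p*q + α*q^2) : False := by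
  have hind := indep4 F hx hy hyx htop hrank
  have e1 : x*x = α • (1:A) + x := by
    rw [hxx F hx, Algebra.algebraMap_eq_smul_one]
  have e2 : y*y = β • (1:A) := by rw [hyy F hy, Algebra.algebraMap_eq_smul_one]
  have e3 : y*x = x*y + y := hyx' hyx
  have key : (p • (1:A) + q • x + y) * ((p+q) • (1:A) + q • x + y) = 0 := by
    simp only [mul_add, add_mul, smul_mul_assoc, mul_smul_comm, smul_smul,
      mul_one, one_mul, e1, e2, e3, smul_add]
    match_scalars
    · linear_combination (-1 : F)*hβ + β*(h2F F)
    · linear_combination (p*q+q^2)*(h2F F)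
    · linear_combination (p+q)*(h2F F)
    · linear_combination q*(h2F F)
  rcases eq_or_ne (p • (1:A) + q • x + y) 0 with h1 | h1
  · have h0 : p • (1:A) + q • x + (1:F) • y + (0:F) • (x*y) = 0 := by
      simp only [one_smul, zero_smul, add_zero]
      exact h1
    exact one_ne_zero (coeffs4' F hind _ _ _ _ h0).2.2.1
  · have hu2 : (p+q) • (1:A) + q • x + y = 0 :=
      (IsUnit.mul_right_eq_zero (hdiv _ h1)).mp key
    have h0 : (p+q) • (1:A) + q • x + (1:F) • y + (0:F) • (x*y) = 0 := by
      simp only [one_smul, zero_smul, add_zero]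
      exact hu2
    exact one_ne_zero (coeffs4' F hind _ _ _ _ h0).2.2.1

end

lemma nm_mul (F : Type) [Field F] [CharP F 2] (α u v s t : F) :
    (u^2+u*v+α*v^2) * (s^2+s*t+α*t^2)
      = (u*s+α*v*t)^2 + (u*s+α*v*t)*(u*t+v*s+v*t) + α*(u*t+v*s+v*t)^2 := by
  linear_combination (-(α*v*t*(u*t+v*s+2*u*s+v*t))) * (h2F F)


/-- `A` is the quaternion algebra `[α, β)_{2,F} = F⟨x, y : x² + x = α, y² = β,
yxy⁻¹ = x + 1⟩` over a field `F` of characteristic 2. -/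
def IsSymbolAlgebra2 (F : Type) [Field F] (α β : F)
    (A : Type) [Ring A] [Algebra F A] : Prop :=
  Module.finrank F A = 4 ∧
    ∃ x y : A, x ^ 2 + x = algebraMap F A α ∧ y ^ 2 = algebraMap F A β ∧
      y * x = (x + 1) * y ∧ IsUnit y ∧ Algebra.adjoin F {x, y} = ⊤

/-- For division quaternion algebras `[α,β)_{2,F}` and `[α,γ)_{2,F}` over
a field `F` of characteristic 2: the two algebras share a purely inseparable quadratic
subfield `F[√δ]` iff `γ` is a value of the reduced norm form `[1,α] ⊥ β[1,α]` of
`[α,β)`.  Equivalently, the form `⟨1⟩ ⊥ β[1,α] ⊥ γ[1,α]` is isotropic iff `γ` is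
represented by `[1,α] ⊥ β[1,α]`.  (Here `[a,b](u,v) = au² + uv + bv²`.) -/
theorem stmt_6 (F : Type) [Field F] [CharP F 2] (α β γ : F)
    (A B : Type) [Ring A] [Algebra F A] [Ring B] [Algebra F B]
    (hA : IsSymbolAlgebra2 F α β A) (hB : IsSymbolAlgebra2 F α γ B)
    (hAdiv : ∀ a : A, a ≠ 0 → IsUnit a) (hBdiv : ∀ b : B, b ≠ 0 → IsUnit b) :
    ((∃ δ : F, (∀ c : F, c ^ 2 ≠ δ) ∧
        (∃ w : A, w ∉ Set.range (algebraMap F A) ∧ w ^ 2 = algebraMap F A δ) ∧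
        (∃ w : B, w ∉ Set.range (algebraMap F B) ∧ w ^ 2 = algebraMap F B δ)) ↔
      (∃ u v s t : F,
        γ = (u ^ 2 + u * v + α * v ^ 2) + β * (s ^ 2 + s * t + α * t ^ 2))) ∧
    ((∃ a u v s t : F, ¬(a = 0 ∧ u = 0 ∧ v = 0 ∧ s = 0 ∧ t = 0) ∧
        a ^ 2 + β * (u ^ 2 + u * v + α * v ^ 2)
          + γ * (s ^ 2 + s * t + α * t ^ 2) = 0) ↔
      (∃ u v s t : F,
        γ = (u ^ 2 + u * v + α * v ^ 2) + β * (s ^ 2 + s * t + α * t ^ 2))) := by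
  obtain ⟨hrkA, xA, yA, hxA, hyA, hyxA, -, htopA⟩ := hA
  obtain ⟨hrkB, xB, yB, hxB, hyB, hyxB, -, htopB⟩ := hB
  have sqA := sqrt_char F hxA hyA hyxA htopA hrkA
  have sqB := sqrt_char F hxB hyB hyxB htopB hrkB
  have anisoF := aniso F hxA hyA hyxA htopA hrkA hAdiv
  have nnA := not_norm F hxA hyA hyxA htopA hrkA hAdiv
  have nnB := not_norm F hxB hyB hyxB htopB hrkB hBdiv
  constructor
  · constructor
    · -- linked → represented
      rintro ⟨δ, hns, hwA, hwB⟩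
      rw [sqA δ] at hwA
      rw [sqB δ] at hwB
      obtain ⟨a, c, d, hcd, hδ1⟩ := hwA
      obtain ⟨a', c', d', hcd', hδ2⟩ := hwB
      have hk0 : c'^2 + c'*d' + α*d'^2 ≠ 0 := by
        intro h0
        exact hns a' (by rw [hδ2, h0, mul_zero, add_zero])
      obtain ⟨p, q, hpq⟩ := nm_inv F α c' d' hk0
      have hD : a^2 + β*(c^2+c*d+α*d^2) = a'^2 + γ*(c'^2+c'*d'+α*d'^2) := by
        rw [← hδ1, ← hδ2]
      refine ⟨(a+a')*p, (a+a')*q, c*p+α*d*q, c*q+d*p+d*q, ?_⟩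
      linear_combination (-γ)*hpq - (p^2+p*q+α*q^2)*hD
        - ((a*a'+a'^2)*(p^2+p*q+α*q^2))*(h2F F)
        + nm_mul F α (a+a') 0 p q + β*(nm_mul F α c d p q)
    · -- represented → linked
      rintro ⟨u, v, s, t, hγ⟩
      by_cases huv : u = 0 ∧ v = 0
      · obtain ⟨rfl, rfl⟩ := huv
        have hst : ¬(s = 0 ∧ t = 0) := by
          rintro ⟨rfl, rfl⟩
          exact nnB 0 0 (by linear_combination hγ)
        refine ⟨γ, ?_, ?_, ?_⟩
        · intro c0 hc0
          exact nnB c0 0 (by linear_combination -hc0)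
        · rw [sqA]
          exact ⟨0, s, t, hst, by linear_combination hγ⟩
        · rw [sqB]
          exact ⟨0, 1, 0, by simp, by ring⟩
      · have hm0 : u^2 + u*v + α*v^2 ≠ 0 := fun h0 => huv (anisoF u v h0)
        obtain ⟨p, q, hpq⟩ := nm_inv F α u v hm0
        refine ⟨γ*(u^2+u*v+α*v^2), ?_, ?_, ?_⟩
        · intro c0 hc0
          apply nnB (c0*p) (c0*q)
          linear_combination (-γ)*hpq - (p^2+p*q+α*q^2)*hc0
            + nm_mul F α c0 0 p q
        · rw [sqA]
          refine ⟨u^2+u*v+α*v^2, s*u+α*t*v, s*v+t*u+t*v, ?_, ?_⟩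
          · rintro ⟨hc, hd⟩
            have h0 : (s^2+s*t+α*t^2) * (u^2+u*v+α*v^2) = 0 := by
              rw [nm_mul F α s t u v, hc, hd]
              ring
            rcases mul_eq_zero.mp h0 with h | h
            · obtain ⟨rfl, rfl⟩ := anisoF s t h
              exact nnB u v (by linear_combination hγ)
            · exact hm0 h
          · linear_combination (u^2+u*v+α*v^2)*hγ + β*(nm_mul F α s t u v)
        · rw [sqB]
          exact ⟨0, u, v, huv, by ring⟩
  · constructor
    · -- isotropic → represented
      rintro ⟨a, u, v, s, t, hnz, hiso⟩
      by_cases hst : s = 0 ∧ t = 0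
      · obtain ⟨rfl, rfl⟩ := hst
        exfalso
        by_cases huv : u = 0 ∧ v = 0
        · obtain ⟨rfl, rfl⟩ := huv
          apply hnz
          refine ⟨?_, rfl, rfl, rfl, rfl⟩
          have ha2 : a^2 = 0 := by linear_combination hiso
          exact pow_eq_zero_iff (n := 2) (by norm_num) |>.mp ha2
        · have hm0 : u^2 + u*v + α*v^2 ≠ 0 := fun h0 => huv (anisoF u v h0)
          obtain ⟨p, q, hpq⟩ := nm_inv F α u v hm0
          apply nnA (a*p) (a*q)
          have hiso0 : a^2 + β*(u^2+u*v+α*v^2) = 0 := by linear_combination hiso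
          linear_combination (-β)*hpq - (p^2+p*q+α*q^2)*hiso0
            + (β*(p^2+p*q+α*q^2)*(u^2+u*v+α*v^2))*(h2F F)
            + nm_mul F α a 0 p q
      · have hk0 : s^2 + s*t + α*t^2 ≠ 0 := fun h0 => hst (anisoF s t h0)
        obtain ⟨p, q, hpq⟩ := nm_inv F α s t hk0
        refine ⟨a*p, a*q, u*p+α*v*q, u*q+v*p+v*q, ?_⟩
        linear_combination (-γ)*hpq - (p^2+p*q+α*q^2)*hiso
          + (γ*(p^2+p*q+α*q^2)*(s^2+s*t+α*t^2))*(h2F F)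
          + nm_mul F α a 0 p q + β*(nm_mul F α u v p q)
    · -- represented → isotropic
      rintro ⟨u, v, s, t, hγ⟩
      by_cases huv : u = 0 ∧ v = 0
      · obtain ⟨rfl, rfl⟩ := huv
        exact ⟨0, s, t, 1, 0, by simp, by
          linear_combination hγ + (β*(s^2+s*t+α*t^2))*(h2F F)⟩
      · refine ⟨u^2+u*v+α*v^2, s*u+α*t*v, s*v+t*u+t*v, u, v, ?_, ?_⟩
        · rintro ⟨-, -, -, h4, h5⟩
          exact huv ⟨h4, h5⟩
        · linear_combination (u^2+u*v+α*v^2)*hγ + β*(nm_mul F α s t u v)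
            + ((u^2+u*v+α*v^2)^2
              + β*((s*u+α*t*v)^2+(s*u+α*t*v)*(s*v+t*u+t*v)+α*(s*v+t*u+t*v)^2))*(h2F F)
end

section
/- Let F be a field of characteristic 2 and let [α,β)_{2,F} and [α,γ)_{2,F} be division quaternion algebras. Then the two algebras contain a common purely inseparable quadratic extension F[√δ] of F if and only if γ is represented by the norm form N of [α,β)_{2,F}, i.e. γ ∈ N(F ⊕ F·x ⊕ F·y ⊕ F·xy) where N is the reduced norm quadratic form [1,α] ⊥ β[1,α]. -/
section Aux

variable {F : Type} [Field F] [CharP F 2] {α β : F} {A : Type} [Ring A] [Algebra F A]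

omit [CharP F 2] in
lemma nontrivial_of_symbol (hA : IsSymbolAlgebra2 F α β A) : Nontrivial A := by
  by_contra h
  rw [not_nontrivial_iff_subsingleton] at h
  have := Module.finrank_zero_of_subsingleton (R := F) (M := A)
  rw [hA.1] at this
  omega

lemma symbolBasis (hA : IsSymbolAlgebra2 F α β A) :
    ∃ (x y : A) (Bs : Module.Basis (Fin 4) F A),
      x * x = algebraMap F A α + x ∧ y * y = algebraMap F A β ∧
      y * x = x * y + y ∧ IsUnit y ∧
      Bs 0 = 1 ∧ Bs 1 = x ∧ Bs 2 = y ∧ Bs 3 = x * y := by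
  obtain ⟨hrank, x, y, hx, hy, hc, hyu, hadj⟩ := hA
  have hnt : Nontrivial A := nontrivial_of_symbol ⟨hrank, x, y, hx, hy, hc, hyu, hadj⟩
  have hchar : CharP A 2 := charP_of_injective_algebraMap (algebraMap F A).injective 2
  have hcm : ∀ (r : F) (z : A), z * algebraMap F A r = r • z := fun r z => by
    rw [Algebra.smul_def, Algebra.commutes]
  have hxx : x * x = algebraMap F A α + x := by
    have h : x * x + x = algebraMap F A α := by rw [← hx, pow_two]
    rw [← h, add_assoc, CharTwo.add_self_eq_zero, add_zero]
  have hyy : y * y = algebraMap F A β := by rw [← hy, pow_two]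
  have hyx : y * x = x * y + y := by rw [hc, add_mul, one_mul]
  set sb : Set A := {1, x, y, x * y} with hsb
  set M : Submodule F A := Submodule.span F sb with hM
  have m1 : (1 : A) ∈ M := Submodule.subset_span (by simp [hsb])
  have mx : x ∈ M := Submodule.subset_span (by simp [hsb])
  have my : y ∈ M := Submodule.subset_span (by simp [hsb])
  have mz : x * y ∈ M := Submodule.subset_span (by simp [hsb])
  have hxz : x * (x * y) = α • y + x * y := by
    rw [← mul_assoc, hxx, add_mul, Algebra.smul_def]
  have hzx : (x * y) * x = α • y := by
    have h2A : x * y + x * y = 0 := by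
      rw [← two_smul F (x*y), CharTwo.two_eq_zero (R := F), zero_smul]
    rw [mul_assoc, hyx, mul_add, hxz, add_assoc, h2A, add_zero]
  have hzy : (x * y) * y = β • x := by rw [mul_assoc, hyy, hcm]
  have hyz : y * (x * y) = β • x + β • 1 := by
    rw [← mul_assoc, hyx, add_mul, mul_assoc, hyy, hcm, Algebra.algebraMap_eq_smul_one]
  have hzz : (x * y) * (x * y) = (α * β) • 1 := by
    rw [← mul_assoc, hzx, smul_mul_assoc, hyy, Algebra.algebraMap_eq_smul_one, smul_smul]
  have key : ∀ p ∈ sb, ∀ q ∈ sb, p * q ∈ M := by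
    intro p hp q hq
    rcases hp with rfl | rfl | rfl | rfl <;> rcases hq with rfl | rfl | rfl | rfl <;>
      (try simp only [one_mul, mul_one, hxx, hyy, hyx, hxz, hzx, hzy, hyz, hzz,
        Algebra.algebraMap_eq_smul_one]) <;>
      first
        | exact m1 | exact mx | exact my | exact mz
        | exact M.add_mem (M.smul_mem _ m1) mx
        | exact M.smul_mem _ m1
        | exact M.add_mem mz my
        | exact M.add_mem (M.smul_mem _ my) mz
        | exact M.smul_mem _ my
        | exact M.smul_mem _ mx
        | exact M.add_mem (M.smul_mem _ mx) (M.smul_mem _ m1)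
  have hMM : M * M ≤ M := by
    rw [hM, Submodule.span_mul_span, Submodule.span_le]
    rintro _ ⟨p, hp, q, hq, rfl⟩
    exact key p hp q hq
  set S : Subalgebra F A :=
    M.toSubalgebra m1 (fun a b ha hb => hMM (Submodule.mul_mem_mul ha hb)) with hS
  have hle : Algebra.adjoin F {x, y} ≤ S := Algebra.adjoin_le (by
    rintro z (rfl | rfl)
    · exact mx
    · exact my)
  have htop : ∀ z : A, z ∈ M := by
    intro z
    have : z ∈ Algebra.adjoin F {x, y} := hadj ▸ Algebra.mem_top
    exact hle this
  set b : Fin 4 → A := ![1, x, y, x * y] with hb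
  have hrange : Set.range b = sb := by
    ext z
    constructor
    · rintro ⟨i, rfl⟩
      fin_cases i <;> simp [hb, hsb]
    · intro hz
      rw [hsb] at hz
      simp only [Set.mem_insert_iff, Set.mem_singleton_iff] at hz
      rcases hz with rfl | rfl | rfl | rfl
      exacts [⟨0, by simp [hb]⟩, ⟨1, by simp [hb]⟩, ⟨2, by simp [hb]⟩, ⟨3, by simp [hb]⟩]
  have hspan : ⊤ ≤ Submodule.span F (Set.range b) := by
    rw [hrange]; intro z _; exact htop z
  have hcard : Fintype.card (Fin 4) = Module.finrank F A := by simp [hrank]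
  refine ⟨x, y, basisOfTopLeSpanOfCardEqFinrank b hspan hcard, hxx, hyy, hyx, hyu,
    ?_, ?_, ?_, ?_⟩ <;>
    simp [coe_basisOfTopLeSpanOfCardEqFinrank, hb]

lemma sq_expand (x y : A) (hxx : x * x = algebraMap F A α + x)
    (hyy : y * y = algebraMap F A β) (hyx : y * x = x * y + y) (a b c d : F) :
    (a • (1:A) + b • x + c • y + d • (x * y)) ^ 2
      = (a^2 + α*b^2 + β*c^2 + α*β*d^2 + β*c*d) • (1:A)
        + (b^2) • x + (b*c) • y + (b*d) • (x * y) := by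
  have h2F : (2 : F) = 0 := CharTwo.two_eq_zero
  have hcm : ∀ (r : F) (z : A), z * algebraMap F A r = r • z := fun r z => by
    rw [Algebra.smul_def, Algebra.commutes]
  have hxx' : x * x = α • 1 + x := by rw [hxx, Algebra.algebraMap_eq_smul_one]
  have hyy' : y * y = β • 1 := by rw [hyy, Algebra.algebraMap_eq_smul_one]
  have hxz : x * (x * y) = α • y + x * y := by
    rw [← mul_assoc, hxx, add_mul, Algebra.smul_def]
  have hzx : (x * y) * x = α • y := by
    have h2A : x * y + x * y = 0 := by
      rw [← two_smul F (x*y), h2F, zero_smul]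
    rw [mul_assoc, hyx, mul_add, hxz, add_assoc, h2A, add_zero]
  have hzy : (x * y) * y = β • x := by rw [mul_assoc, hyy, hcm]
  have hyz : y * (x * y) = β • x + β • 1 := by
    rw [← mul_assoc, hyx, add_mul, mul_assoc, hyy, hcm, Algebra.algebraMap_eq_smul_one]
  have hzz : (x * y) * (x * y) = (α * β) • 1 := by
    rw [← mul_assoc, hzx, smul_mul_assoc, hyy, Algebra.algebraMap_eq_smul_one, smul_smul]
  rw [pow_two]
  simp only [mul_add, add_mul, smul_mul_smul_comm, one_mul, mul_one,
    hxx', hyy', hyx, hxz, hzx, hzy, hyz, hzz]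
  match_scalars <;>
    first
      | linear_combination (b*a + d*c*β) * h2F
      | linear_combination (c*a + b*d*α) * h2F
      | linear_combination (d*a + c*b) * h2F
      | ring

omit [CharP F 2] in
lemma coords_eq (Bs : Module.Basis (Fin 4) F A) (x y : A)
    (h0 : Bs 0 = 1) (h1 : Bs 1 = x) (h2 : Bs 2 = y) (h3 : Bs 3 = x * y)
    {a b c d a' b' c' d' : F}
    (h : a • (1:A) + b • x + c • y + d • (x * y)
       = a' • (1:A) + b' • x + c' • y + d' • (x * y)) :
    a = a' ∧ b = b' ∧ c = c' ∧ d = d' := by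
  have li := Bs.linearIndependent
  rw [Fintype.linearIndependent_iff] at li
  have key : ∀ i, (![a - a', b - b', c - c', d - d'] : Fin 4 → F) i = 0 := by
    apply li
    have : ∑ i : Fin 4, (![a - a', b - b', c - c', d - d'] : Fin 4 → F) i • Bs i
        = (a • (1:A) + b • x + c • y + d • (x * y))
          - (a' • (1:A) + b' • x + c' • y + d' • (x * y)) := by
      rw [Fin.sum_univ_four]
      simp only [h0, h1, h2, h3, Matrix.cons_val_zero, Matrix.cons_val_one, Matrix.head_cons,
        Matrix.cons_val_two, Matrix.tail_cons, Matrix.cons_val_three]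
      module
    rw [this, sub_eq_zero]
    exact h
  refine ⟨?_, ?_, ?_, ?_⟩ <;>
    [have := key 0; have := key 1; have := key 2; have := key 3] <;>
    simp only [Matrix.cons_val_zero, Matrix.cons_val_one, Matrix.head_cons,
      Matrix.cons_val_two, Matrix.tail_cons, Matrix.cons_val_three] at this <;>
    exact sub_eq_zero.mp this

/-- In a division symbol algebra, `α` is not in the image of the Artin–Schreier map. -/
lemma artin_schreier (hnt : Nontrivial A) (x y : A) (Bs : Module.Basis (Fin 4) F A)
    (hxx : x * x = algebraMap F A α + x) (hyx : y * x = x * y + y)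
    (h0 : Bs 0 = 1) (h1 : Bs 1 = x) (h2 : Bs 2 = y) (h3 : Bs 3 = x * y)
    (hdiv : ∀ a : A, a ≠ 0 → IsUnit a) :
    ∀ r : F, r ^ 2 + r ≠ α := by
  have h2F : (2 : F) = 0 := CharTwo.two_eq_zero
  have hy0 : y ≠ 0 := h2 ▸ Bs.ne_zero 2
  have hcm : ∀ (r : F) (z : A), z * algebraMap F A r = r • z := fun r z => by
    rw [Algebra.smul_def, Algebra.commutes]
  have xne : ∀ r : F, x ≠ algebraMap F A r := by
    intro r hxr
    apply hy0
    have h := hyx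
    rw [hxr, hcm, Algebra.smul_def, left_eq_add] at h
    exact h
  intro r hr
  set p : A := x + algebraMap F A r with hp
  set q : A := x + algebraMap F A (r + 1) with hq
  have hpq : p * q = 0 := by
    have e1 : x * algebraMap F A (r+1) = (r+1) • x := hcm _ _
    have e2 : algebraMap F A r * x = r • x := (Algebra.smul_def r x).symm
    have e3 : algebraMap F A r * algebraMap F A (r+1) = (r*(r+1)) • (1:A) := by
      rw [← map_mul, Algebra.algebraMap_eq_smul_one]
    rw [hp, hq, mul_add, add_mul, add_mul, hxx, e1, e2, e3,
      Algebra.algebraMap_eq_smul_one]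
    match_scalars
    · linear_combination hr + α * h2F
    · linear_combination (r + 1) * h2F
  have hpne : p ≠ 0 := by
    intro h
    apply xne (-r)
    rw [map_neg]
    rw [hp, add_eq_zero_iff_eq_neg] at h
    exact h
  have hqne : q ≠ 0 := by
    intro h
    apply xne (-(r+1))
    rw [map_neg]
    rw [hq, add_eq_zero_iff_eq_neg] at h
    exact h
  have : IsUnit (p * q) := (hdiv p hpne).mul (hdiv q hqne)
  rw [hpq, isUnit_zero_iff] at this
  exact zero_ne_one (α := A) this

/-- In a division symbol algebra, `β` is not represented by `[1, α]`. -/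
lemma norm_ne (hnt : Nontrivial A) (x y : A) (Bs : Module.Basis (Fin 4) F A)
    (hxx : x * x = algebraMap F A α + x) (hyy : y * y = algebraMap F A β)
    (hyx : y * x = x * y + y)
    (h0 : Bs 0 = 1) (h1 : Bs 1 = x) (h2 : Bs 2 = y) (h3 : Bs 3 = x * y)
    (hdiv : ∀ a : A, a ≠ 0 → IsUnit a) :
    ∀ u v : F, u ^ 2 + u * v + α * v ^ 2 ≠ β := by
  have h2F : (2 : F) = 0 := CharTwo.two_eq_zero
  intro u v hβ
  set q : A := u • (1:A) + v • x + (1:F) • y + (0:F) • (x * y) with hq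
  have hq2 : q * (q + algebraMap F A v) = 0 := by
    have : q * (q + algebraMap F A v) = q ^ 2 + v • q := by
      rw [mul_add, ← pow_two, Algebra.smul_def, Algebra.commutes]
    rw [this, hq, sq_expand x y hxx hyy hyx]
    match_scalars
    · linear_combination hβ + β * h2F
    · linear_combination v^2 * h2F
    · linear_combination v * h2F
    · ring
  have hqne : q ≠ 0 := by
    intro h
    have h' : u • (1:A) + v • x + (1:F) • y + (0:F) • (x * y)
        = (0:F) • (1:A) + (0:F) • x + (0:F) • y + (0:F) • (x * y) := by
      rw [← hq, h]; simp
    exact one_ne_zero (coords_eq Bs x y h0 h1 h2 h3 h').2.2.1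
  have hqvne : q + algebraMap F A v ≠ 0 := by
    intro h
    have h' : (u + v) • (1:A) + v • x + (1:F) • y + (0:F) • (x * y)
        = (0:F) • (1:A) + (0:F) • x + (0:F) • y + (0:F) • (x * y) := by
      calc (u + v) • (1:A) + v • x + (1:F) • y + (0:F) • (x * y)
          = q + algebraMap F A v := by
            rw [hq, Algebra.algebraMap_eq_smul_one]; module
        _ = 0 := h
        _ = (0:F) • (1:A) + (0:F) • x + (0:F) • y + (0:F) • (x * y) := by simp
    exact one_ne_zero (coords_eq Bs x y h0 h1 h2 h3 h').2.2.1
  have : IsUnit (q * (q + algebraMap F A v)) := (hdiv _ hqne).mul (hdiv _ hqvne)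
  rw [hq2, isUnit_zero_iff] at this
  exact zero_ne_one (α := A) this

/-- Anisotropy of the norm form `[1, α]` when `α` is not Artin–Schreier. -/
lemma aniso_s15 (hAS : ∀ r : F, r ^ 2 + r ≠ α) :
    ∀ u v : F, u ^ 2 + u * v + α * v ^ 2 = 0 → u = 0 ∧ v = 0 := by
  have h2F : (2 : F) = 0 := CharTwo.two_eq_zero
  intro u v h
  by_cases hv : v = 0
  · subst hv
    refine ⟨?_, rfl⟩
    have : u ^ 2 = 0 := by linear_combination h
    exact sq_eq_zero_iff.mp this
  · exfalso
    apply hAS (u / v)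
    field_simp
    linear_combination h - (α * v^2) * h2F

/-- Extraction of coordinates from a purely inseparable square root. -/
lemma pure_sq (x y : A) (Bs : Module.Basis (Fin 4) F A)
    (hxx : x * x = algebraMap F A α + x) (hyy : y * y = algebraMap F A β)
    (hyx : y * x = x * y + y)
    (h0 : Bs 0 = 1) (h1 : Bs 1 = x) (h2 : Bs 2 = y) (h3 : Bs 3 = x * y)
    {w : A} {δ : F}
    (hw : w ∉ Set.range (algebraMap F A)) (hsq : w ^ 2 = algebraMap F A δ) :
    ∃ a c d : F, (c ≠ 0 ∨ d ≠ 0) ∧ δ = a^2 + β*(c^2 + c*d + α*d^2) := by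
  set a := Bs.repr w 0 with ha
  set b := Bs.repr w 1 with hb
  set c := Bs.repr w 2 with hc
  set d := Bs.repr w 3 with hd
  have hwrep : w = a • (1:A) + b • x + c • y + d • (x * y) := by
    have := Bs.sum_repr w
    rw [Fin.sum_univ_four, h0, h1, h2, h3] at this
    exact this.symm
  have hsq' : (a^2 + α*b^2 + β*c^2 + α*β*d^2 + β*c*d) • (1:A)
        + (b^2) • x + (b*c) • y + (b*d) • (x * y)
      = δ • (1:A) + (0:F) • x + (0:F) • y + (0:F) • (x * y) := by
    rw [← sq_expand x y hxx hyy hyx, ← hwrep, hsq, Algebra.algebraMap_eq_smul_one]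
    simp
  obtain ⟨e1, e2, e3, e4⟩ := coords_eq Bs x y h0 h1 h2 h3 hsq'
  have hb0 : b = 0 := sq_eq_zero_iff.mp e2
  refine ⟨a, c, d, ?_, ?_⟩
  · by_contra hcon
    push_neg at hcon
    apply hw
    refine ⟨a, ?_⟩
    rw [hwrep, hb0, hcon.1, hcon.2, Algebra.algebraMap_eq_smul_one]
    simp
  · rw [hb0] at e1
    linear_combination -e1

/-- Construction of a purely inseparable square root from coordinates. -/
lemma mk_pure (x y : A) (Bs : Module.Basis (Fin 4) F A)
    (hxx : x * x = algebraMap F A α + x) (hyy : y * y = algebraMap F A β)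
    (hyx : y * x = x * y + y)
    (h0 : Bs 0 = 1) (h1 : Bs 1 = x) (h2 : Bs 2 = y) (h3 : Bs 3 = x * y)
    (a c d : F) (hcd : c ≠ 0 ∨ d ≠ 0) :
    (a • (1:A) + c • y + d • (x * y)) ∉ Set.range (algebraMap F A) ∧
    (a • (1:A) + c • y + d • (x * y)) ^ 2
      = algebraMap F A (a^2 + β*(c^2 + c*d + α*d^2)) := by
  have hrw : a • (1:A) + c • y + d • (x * y)
      = a • (1:A) + (0:F) • x + c • y + d • (x * y) := by
    simp
  constructor
  · rintro ⟨m, hm⟩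
    have h' : m • (1:A) + (0:F) • x + (0:F) • y + (0:F) • (x * y)
        = a • (1:A) + (0:F) • x + c • y + d • (x * y) := by
      rw [← hrw, ← hm, Algebra.algebraMap_eq_smul_one]
      simp
    obtain ⟨-, -, ec, ed⟩ := coords_eq Bs x y h0 h1 h2 h3 h'
    rcases hcd with hc | hd
    · exact hc ec.symm
    · exact hd ed.symm
  · rw [hrw, sq_expand x y hxx hyy hyx, Algebra.algebraMap_eq_smul_one]
    match_scalars <;> ring

end Aux

/-- Let `F` have characteristic 2, and let `[α,β)_{2,F}` and
`[α,γ)_{2,F}` be division quaternion algebras.  They contain a common purely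
inseparable quadratic extension `F[√δ]` of `F` if and only if `γ` is represented by
the reduced norm form `[1,α] ⊥ β[1,α]` of `[α,β)_{2,F}`, i.e.
`γ = (u² + uv + αv²) + β(s² + st + αt²)` for some `u, v, s, t ∈ F`. -/
theorem stmt_15 (F : Type) [Field F] [CharP F 2] (α β γ : F)
    (A B : Type) [Ring A] [Algebra F A] [Ring B] [Algebra F B]
    (hA : IsSymbolAlgebra2 F α β A) (hB : IsSymbolAlgebra2 F α γ B)
    (hAdiv : ∀ a : A, a ≠ 0 → IsUnit a) (hBdiv : ∀ b : B, b ≠ 0 → IsUnit b) :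
    (∃ δ : F, (∀ c : F, c ^ 2 ≠ δ) ∧
        (∃ w : A, w ∉ Set.range (algebraMap F A) ∧ w ^ 2 = algebraMap F A δ) ∧
        (∃ w : B, w ∉ Set.range (algebraMap F B) ∧ w ^ 2 = algebraMap F B δ)) ↔
      (∃ u v s t : F,
        γ = (u ^ 2 + u * v + α * v ^ 2) + β * (s ^ 2 + s * t + α * t ^ 2)) := by
  obtain ⟨x, y, Bs, hxx, hyy, hyx, hyu, e0, e1, e2, e3⟩ := symbolBasis hA
  obtain ⟨x', y', Bs', hxx', hyy', hyx', hyu', f0, f1, f2, f3⟩ := symbolBasis hB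
  have hntA : Nontrivial A := nontrivial_of_symbol hA
  have hntB : Nontrivial B := nontrivial_of_symbol hB
  have h2F : (2:F) = 0 := CharTwo.two_eq_zero
  have hAS : ∀ r : F, r^2 + r ≠ α := artin_schreier hntA x y Bs hxx hyx e0 e1 e2 e3 hAdiv
  have haniso := aniso_s15 hAS
  have hβne := norm_ne hntA x y Bs hxx hyy hyx e0 e1 e2 e3 hAdiv
  have hγne := norm_ne hntB x' y' Bs' hxx' hyy' hyx' f0 f1 f2 f3 hBdiv
  have hNdiv : ∀ k X Y : F, k ≠ 0 →
      (X/k)^2 + X/k * (Y/k) + α * (Y/k)^2 = (X^2 + X*Y + α*Y^2)/k^2 := by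
    intro k X Y hk
    field_simp
  constructor
  · rintro ⟨δ, hδns, ⟨wA, hwA, hwA2⟩, ⟨wB, hwB, hwB2⟩⟩
    obtain ⟨a, c, d, hcd, hδA⟩ := pure_sq x y Bs hxx hyy hyx e0 e1 e2 e3 hwA hwA2
    obtain ⟨e, s, t, hst, hδB⟩ := pure_sq x' y' Bs' hxx' hyy' hyx' f0 f1 f2 f3 hwB hwB2
    have hk : s^2 + s*t + α*t^2 ≠ 0 := by
      intro h0k
      obtain ⟨hs, ht⟩ := haniso s t h0k
      rcases hst with h | h
      · exact h hs
      · exact h ht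
    refine ⟨(a+e)*s/(s^2+s*t+α*t^2), (a+e)*t/(s^2+s*t+α*t^2),
      (c*s+α*d*t)/(s^2+s*t+α*t^2), (c*t+d*s+d*t)/(s^2+s*t+α*t^2), ?_⟩
    have heq : a^2 + β*(c^2+c*d+α*d^2) = e^2 + γ*(s^2+s*t+α*t^2) := by
      rw [← hδA, hδB]
    rw [hNdiv _ _ _ hk, hNdiv _ _ _ hk, ← mul_div_assoc, ← add_div,
      eq_div_iff (pow_ne_zero 2 hk)]
    linear_combination (-(s*t) - s^2 - α*t^2) * heq +
      (-(e^2*s*t) - e^2*s^2 - a*e*s*t - a*e*s^2 - α*e^2*t^2 - α*a*e*t^2 - α*β*d^2*t^2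
        - α*β*d^2*s*t - α*β*c*d*t^2 - 2*α*β*c*d*s*t) * h2F
  · rintro ⟨u, v, s, t, hγeq⟩
    have hγ0 : γ ≠ 0 := fun h => hγne 0 0 (by rw [h]; ring)
    have hQ : s^2 + s*t + α*t^2 ≠ 0 := by
      intro h0
      exact hγne u v (by linear_combination hγeq + β * h0 + (u^2 + u*v + α*v^2 - γ) * h2F)
    have hstne : s ≠ 0 ∨ t ≠ 0 := by
      by_contra hcon
      push_neg at hcon
      exact hQ (by rw [hcon.1, hcon.2]; ring)
    by_cases hP : u^2 + u*v + α*v^2 = 0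
    · obtain ⟨hu, hv⟩ := haniso u v hP
      subst hu hv
      refine ⟨β, fun m hm => hβne m 0 (by rw [← hm]; ring), ?_, ?_⟩
      · obtain ⟨hmem, hsq⟩ := mk_pure x y Bs hxx hyy hyx e0 e1 e2 e3 0 1 0 (Or.inl one_ne_zero)
        exact ⟨_, hmem, by rw [hsq]; congr 1; ring⟩
      · have hcd' : s/(s^2+s*t+α*t^2) ≠ 0 ∨ t/(s^2+s*t+α*t^2) ≠ 0 := by
          rcases hstne with h | h
          · exact Or.inl (div_ne_zero h hQ)
          · exact Or.inr (div_ne_zero h hQ)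
        obtain ⟨hmem, hsq⟩ := mk_pure x' y' Bs' hxx' hyy' hyx' f0 f1 f2 f3 0
          (s/(s^2+s*t+α*t^2)) (t/(s^2+s*t+α*t^2)) hcd'
        refine ⟨_, hmem, ?_⟩
        rw [hsq]
        congr 1
        rw [hNdiv _ _ _ hQ]
        have hQ' : s*(s+t)+t^2*α ≠ 0 := by convert hQ using 1; ring
        field_simp
        linear_combination hγeq
    · refine ⟨β*(s^2+s*t+α*t^2)/(u^2+u*v+α*v^2), ?_, ?_, ?_⟩
      · intro m hm
        apply hβne (m*(u*s+α*v*t)/(s^2+s*t+α*t^2)) (m*(u*t+v*s+v*t)/(s^2+s*t+α*t^2))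
        rw [hNdiv _ _ _ hQ, div_eq_iff (pow_ne_zero 2 hQ)]
        rw [eq_div_iff hP] at hm
        linear_combination (s*t + s^2 + α*t^2) * hm +
          (α*t^2*v^2*m^2 + α*t^2*u*v*m^2 + α*s*t*v^2*m^2 + 2*α*s*t*u*v*m^2) * h2F
      · have hN : (s*u+α*t*v)^2 + (s*u+α*t*v)*(s*v+t*u+t*v) + α*(s*v+t*u+t*v)^2
            = (s^2+s*t+α*t^2)*(u^2+u*v+α*v^2) := by
          linear_combination (α*t^2*v^2 + α*t^2*u*v + α*s*t*v^2 + 2*α*s*t*u*v) * h2F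
        have hcd2 : (s*u+α*t*v)/(u^2+u*v+α*v^2) ≠ 0 ∨
            (s*v+t*u+t*v)/(u^2+u*v+α*v^2) ≠ 0 := by
          by_contra hcon
          push_neg at hcon
          rw [div_eq_zero_iff] at hcon
          have hn1 : s*u+α*t*v = 0 := hcon.1.resolve_right hP
          have hn2 : s*v+t*u+t*v = 0 := by
            have := hcon.2
            rw [div_eq_zero_iff] at this
            exact this.resolve_right hP
          exact mul_ne_zero hQ hP (by rw [← hN, hn1, hn2]; ring)
        obtain ⟨hmem, hsq⟩ := mk_pure x y Bs hxx hyy hyx e0 e1 e2 e3 0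
          ((s*u+α*t*v)/(u^2+u*v+α*v^2)) ((s*v+t*u+t*v)/(u^2+u*v+α*v^2)) hcd2
        refine ⟨_, hmem, ?_⟩
        rw [hsq]
        congr 1
        rw [hNdiv _ _ _ hP]
        have hP' : u*(u+v)+α*v^2 ≠ 0 := by convert hP using 1; ring
        field_simp
        linear_combination β * (α*t^2*v^2 + α*t^2*u*v + α*s*t*v^2 + 2*α*s*t*u*v) * h2F
      · have hcd3 : u/(u^2+u*v+α*v^2) ≠ 0 ∨ v/(u^2+u*v+α*v^2) ≠ 0 := by
          by_contra hcon
          push_neg at hcon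
          rw [div_eq_zero_iff] at hcon
          have hn1 : u = 0 := hcon.1.resolve_right hP
          have hn2 : v = 0 := by
            have := hcon.2
            rw [div_eq_zero_iff] at this
            exact this.resolve_right hP
          exact hP (by rw [hn1, hn2]; ring)
        obtain ⟨hmem, hsq⟩ := mk_pure x' y' Bs' hxx' hyy' hyx' f0 f1 f2 f3 1
          (u/(u^2+u*v+α*v^2)) (v/(u^2+u*v+α*v^2)) hcd3
        refine ⟨_, hmem, ?_⟩
        rw [hsq]
        congr 1
        rw [hNdiv _ _ _ hP]
        have hP' : u*(u+v)+v^2*α ≠ 0 := by convert hP using 1; ring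
        field_simp
        linear_combination hγeq + (u^2+u*v+α*v^2) * h2F
end
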